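/- arXiv:1812.07072 — 5 statements merged into one kernel-verified Lean document; each statement's English description precedes it below -/
import Mathlib

section
/- A W-graph satisfies mean payoff if and only if it does not contain any negative cycle. -/
open Filter


/-- A finite path: a list of consecutive edges, all belonging to `E`,
starting at `u` (when nonempty). -/
def FinPath {V : Type} (E : Set (V × ℤ × V)) (u : V) (p : List (V × ℤ × V)) : Prop :=
  (∀ e ∈ p, e ∈ E) ∧ List.Chain' (fun e e' => e.2.2 = e'.1) p ∧
    ∀ h : p ≠ [], (p.head h).1 = u

/-- The last vertex of a finite path starting at `u` (which is `u` itself for the empty path). -/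
def lastV {V : Type} (u : V) (p : List (V × ℤ × V)) : V :=
  (p.getLastD (u, 0, u)).2.2

/-- An infinite path: a sequence of consecutive edges, all belonging to `E`. -/
def InfPath {V : Type} (E : Set (V × ℤ × V)) (π : ℕ → V × ℤ × V) : Prop :=
  (∀ i, π i ∈ E) ∧ ∀ i, (π i).2.2 = (π (i + 1)).1

/-- The total weight of a finite path. -/
def pathWeight {V : Type} (p : List (V × ℤ × V)) : ℤ :=
  (p.map fun e => e.2.1).sum

/-- A sequence of integer weights satisfies mean payoff if the liminf of the
averages of its prefixes is nonnegative. -/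
def MeanPayoffSeq (w : ℕ → ℤ) : Prop :=
  0 ≤ Filter.atTop.liminf (fun ℓ : ℕ => (∑ i ∈ Finset.range ℓ, (w i : ℝ)) / (ℓ : ℝ))

/-- A graph (given by its edge set) satisfies mean payoff if all its infinite paths do. -/
def SatMP {V : Type} (E : Set (V × ℤ × V)) : Prop :=
  ∀ π : ℕ → V × ℤ × V, InfPath E π → MeanPayoffSeq (fun i => (π i).2.1)

/-- A cycle: a nonempty finite path whose first and last vertices coincide. -/
def IsCycle {V : Type} (E : Set (V × ℤ × V)) (p : List (V × ℤ × V)) : Prop :=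
  p ≠ [] ∧ ∃ v, FinPath E v p ∧ lastV v p = v

/-- A `W`-graph: a finite set of vertices, edges labelled by weights in `W`,
and an initial vertex from which every vertex is reachable. -/
structure WGraph (W : Finset ℤ) where
  V : Type
  fin : Fintype V
  E : Set (V × ℤ × V)
  init : V
  wt : ∀ e ∈ E, e.2.1 ∈ W
  reach : ∀ v : V, ∃ p, FinPath E init p ∧ lastV init p = v

attribute [instance] WGraph.fin

/-! Repeating a negative cycle forever gives an infinite path whose prefix averages return to the
(negative) average weight of the cycle infinitely often. Conversely, without negative cycles every
finite path can be shortened, by cutting out cycles, to a path of length at most `|V|` without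
increasing its weight; so the prefix sums of an infinite path are bounded below, and its prefix
averages have nonnegative liminf. -/

noncomputable def prefixMean (w : ℕ → ℤ) (ℓ : ℕ) : ℝ :=
  (∑ i ∈ Finset.range ℓ, (w i : ℝ)) / ℓ

lemma meanPayoffSeq_iff {w : ℕ → ℤ} : MeanPayoffSeq w ↔ 0 ≤ atTop.liminf (prefixMean w) :=
  Iff.rfl

lemma Function.Periodic.sum_range_mul {M : Type*} [AddCommMonoid M] {f : ℕ → M} {n : ℕ}
    (hf : Function.Periodic f n) (k : ℕ) :
    ∑ i ∈ Finset.range (k * n), f i = k • ∑ i ∈ Finset.range n, f i := by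
  induction k with
  | zero => simp
  | succ k ih =>
    rw [add_mul, one_mul, Finset.sum_range_add, ih, succ_nsmul]
    congr 1
    exact Finset.sum_congr rfl fun j _ => by rw [add_comm]; exact hf.nat_mul k j

lemma prefixMean_mul_of_periodic {w : ℕ → ℤ} {n : ℕ} (hw : Function.Periodic w n) {k : ℕ}
    (hk : k ≠ 0) : prefixMean w (k * n) = prefixMean w n := by
  have hsum := (hw.comp ((↑) : ℤ → ℝ)).sum_range_mul k
  simp only [Function.comp_def] at hsum
  rw [prefixMean, prefixMean, hsum, nsmul_eq_mul, Nat.cast_mul,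
    mul_div_mul_left _ _ (Nat.cast_ne_zero.2 hk)]

lemma le_prefixMean {w : ℕ → ℤ} {m : ℤ} (hm : m ≤ 0) (h : ∀ i, m ≤ w i) (ℓ : ℕ) :
    (m : ℝ) ≤ prefixMean w ℓ := by
  rcases Nat.eq_zero_or_pos ℓ with rfl | hℓ
  · simpa [prefixMean] using hm
  rw [prefixMean, le_div_iff₀ (by exact_mod_cast hℓ)]
  calc (m : ℝ) * ℓ = ∑ _i ∈ Finset.range ℓ, (m : ℝ) := by simp [mul_comm]
    _ ≤ ∑ i ∈ Finset.range ℓ, (w i : ℝ) := Finset.sum_le_sum fun i _ => by exact_mod_cast h i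

lemma meanPayoffSeq_of_forall_le_sum {w : ℕ → ℤ} {C : ℤ}
    (h : ∀ ℓ, C ≤ ∑ i ∈ Finset.range ℓ, w i) : MeanPayoffSeq w := by
  rw [meanPayoffSeq_iff]
  by_cases hcob : IsCoboundedUnder (· ≥ ·) atTop (prefixMean w)
  · have hlim : Tendsto (fun ℓ : ℕ => (C : ℝ) / ℓ) atTop (nhds 0) :=
      tendsto_const_div_atTop_nhds_zero_nat _
    calc (0 : ℝ) = atTop.liminf (fun ℓ : ℕ => (C : ℝ) / ℓ) := hlim.liminf_eq.symm
      _ ≤ atTop.liminf (prefixMean w) :=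
        liminf_le_liminf (Eventually.of_forall fun ℓ =>
          div_le_div_of_nonneg_right (by exact_mod_cast h ℓ) ℓ.cast_nonneg)
          hlim.isBoundedUnder_ge hcob
  · rw [Real.liminf_of_not_isCoboundedUnder hcob]

lemma not_meanPayoffSeq_of_periodic {w : ℕ → ℤ} {n : ℕ} (hw : Function.Periodic w n)
    (hn : 0 < n) (hneg : ∑ i ∈ Finset.range n, w i < 0) : ¬ MeanPayoffSeq w := by
  rw [meanPayoffSeq_iff, not_le]
  obtain ⟨m, hm⟩ : BddBelow (Set.range w) := ((Finset.range n).image w).bddBelow.mono <| by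
    rintro _ ⟨i, rfl⟩
    rw [← hw.map_mod_nat]
    exact Finset.mem_image_of_mem w (Finset.mem_range.2 (Nat.mod_lt i hn))
  have hbdd : IsBoundedUnder (· ≥ ·) atTop (prefixMean w) :=
    isBoundedUnder_of ⟨_, le_prefixMean (min_le_right m 0) fun i =>
      (min_le_left m 0).trans (hm ⟨i, rfl⟩)⟩
  have hfreq : ∃ᶠ ℓ in atTop, prefixMean w ℓ ≤ prefixMean w n :=
    frequently_atTop.2 fun N => ⟨(N + 1) * n, by nlinarith,
      (prefixMean_mul_of_periodic hw N.succ_ne_zero).le⟩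
  calc atTop.liminf (prefixMean w) ≤ prefixMean w n := liminf_le_of_frequently_le hfreq hbdd
    _ < 0 := div_neg_of_neg_of_pos (by exact_mod_cast hneg) (by exact_mod_cast hn)

section Paths

variable {V : Type} {E : Set (V × ℤ × V)} {u : V}

lemma pathWeight_append (a b : List (V × ℤ × V)) :
    pathWeight (a ++ b) = pathWeight a + pathWeight b := by
  simp [pathWeight]

lemma lastV_cons (u : V) (e : V × ℤ × V) (p : List (V × ℤ × V)) :
    lastV u (e :: p) = lastV e.2.2 p := by
  cases p <;> simp [lastV, List.getLast?_eq_some_getLast]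

lemma lastV_append (u : V) (a b : List (V × ℤ × V)) :
    lastV u (a ++ b) = lastV (lastV u a) b := by
  induction a generalizing u with
  | nil => rfl
  | cons e a ih => simp only [List.cons_append, lastV_cons, ih]

lemma lastV_eq_getLast {p : List (V × ℤ × V)} (h : p ≠ []) (u : V) :
    lastV u p = (p.getLast h).2.2 := by
  simp [lastV, List.getLast?_eq_some_getLast h]

lemma finPath_nil : FinPath E u [] :=
  ⟨by simp, List.IsChain.nil, by simp⟩

lemma finPath_cons {e : V × ℤ × V} {p : List (V × ℤ × V)} :
    FinPath E u (e :: p) ↔ e ∈ E ∧ e.1 = u ∧ FinPath E e.2.2 p := by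
  cases p with
  | nil => simp [FinPath, List.Chain']
  | cons e' p => simp [FinPath, List.Chain', List.isChain_cons_cons]; grind

lemma finPath_append {a b : List (V × ℤ × V)} :
    FinPath E u (a ++ b) ↔ FinPath E u a ∧ FinPath E (lastV u a) b := by
  induction a generalizing u with
  | nil => simpa [lastV] using fun _ => finPath_nil
  | cons e a ih => simp only [List.cons_append, finPath_cons, lastV_cons, ih, and_assoc]

lemma length_mul_le_pathWeight {m : ℤ} {p : List (V × ℤ × V)} (h : ∀ e ∈ p, m ≤ e.2.1) :
    p.length * m ≤ pathWeight p := by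
  have := List.card_nsmul_le_sum (p.map fun e => e.2.1) m fun x hx => by
    obtain ⟨e, he, rfl⟩ := List.mem_map.1 hx
    exact h e he
  simpa [pathWeight] using this

/-- Pigeonhole on the endpoints of the first `card V + 1` prefixes of `p`. -/
lemma exists_cycle_of_card_lt_length [Fintype V] {p : List (V × ℤ × V)} (hp : FinPath E u p)
    (hlen : Fintype.card V < p.length) :
    ∃ a c b, p = a ++ c ++ b ∧ IsCycle E c ∧ FinPath E u (a ++ b) := by
  obtain ⟨i, j, hij, hveq⟩ : ∃ i j : Fin (Fintype.card V + 1), i < j ∧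
      lastV u (p.take i) = lastV u (p.take j) := by
    obtain ⟨k₁, k₂, hne, heq⟩ := Fintype.exists_ne_map_eq_of_card_lt
      (fun k : Fin (Fintype.card V + 1) => lastV u (p.take k)) (by simp)
    rcases hne.lt_or_gt with h | h
    exacts [⟨k₁, k₂, h, heq⟩, ⟨k₂, k₁, h, heq.symm⟩]
  set a := p.take i
  set c := (p.drop i).take (j - i)
  have hac : p.take j = a ++ c := by
    rw [← List.take_add, Nat.add_sub_cancel' hij.le]
  have hdecomp : p = a ++ c ++ p.drop j := by rw [← hac, List.take_append_drop]
  refine ⟨a, c, p.drop j, hdecomp, ?_⟩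
  rw [hdecomp, finPath_append, finPath_append] at hp
  obtain ⟨⟨hpa, hpc⟩, hpb⟩ := hp
  have hlastc : lastV (lastV u a) c = lastV u a := by
    rw [← lastV_append, ← hac, ← hveq]
  have hcne : c ≠ [] := by
    rw [← List.length_pos_iff]
    simp only [c, List.length_take, List.length_drop]
    omega
  rw [lastV_append, hlastc] at hpb
  exact ⟨⟨hcne, _, hpc, hlastc⟩, finPath_append.2 ⟨hpa, hpb⟩⟩

lemma card_mul_le_pathWeight_of_no_negCycle [Fintype V] {m : ℤ} (hm : m ≤ 0)
    (hw : ∀ e ∈ E, m ≤ e.2.1) (hnc : ¬ ∃ c, IsCycle E c ∧ pathWeight c < 0)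
    {p : List (V × ℤ × V)} (hp : FinPath E u p) :
    Fintype.card V * m ≤ pathWeight p := by
  induction h : p.length using Nat.strong_induction_on generalizing p with
  | _ n ih =>
  by_cases hshort : p.length ≤ Fintype.card V
  · calc (Fintype.card V : ℤ) * m ≤ p.length * m :=
          mul_le_mul_of_nonpos_right (by exact_mod_cast hshort) hm
      _ ≤ pathWeight p := length_mul_le_pathWeight fun e he => hw e (hp.1 e he)
  obtain ⟨a, c, b, rfl, hc, hab⟩ := exists_cycle_of_card_lt_length hp (not_le.1 hshort)
  have hc_nonneg : 0 ≤ pathWeight c := not_lt.1 fun hneg => hnc ⟨c, hc, hneg⟩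
  have hc_pos : 0 < c.length := List.length_pos_iff.2 hc.1
  have hab_le := ih (a ++ b).length (by simp at h ⊢; omega) hab rfl
  simp only [pathWeight_append] at hab_le ⊢
  omega

lemma infPath_prefix {π : ℕ → V × ℤ × V} (hπ : InfPath E π) (ℓ : ℕ) :
    FinPath E (π 0).1 ((List.range ℓ).map π) := by
  refine ⟨?_, ?_, fun _ => by simp [List.head_eq_getElem]⟩
  · simp only [List.mem_map, List.mem_range]
    rintro _ ⟨i, -, rfl⟩
    exact hπ.1 i
  · exact List.isChain_iff_getElem.2 fun k _ => by simpa using hπ.2 k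

lemma pathWeight_map_range (π : ℕ → V × ℤ × V) (ℓ : ℕ) :
    pathWeight ((List.range ℓ).map π) = ∑ i ∈ Finset.range ℓ, (π i).2.1 := by
  induction ℓ with
  | zero => rfl
  | succ ℓ ih =>
    rw [List.range_succ, List.map_append, pathWeight_append, ih, Finset.sum_range_succ]
    simp [pathWeight]

lemma IsCycle.length_pos {p : List (V × ℤ × V)} (hc : IsCycle E p) : 0 < p.length :=
  List.length_pos_iff.2 hc.1

lemma IsCycle.snd_snd_getElem {p : List (V × ℤ × V)} (hc : IsCycle E p) {j : ℕ}
    (hj : j < p.length) :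
    p[j].2.2 = (p[(j + 1) % p.length]'(Nat.mod_lt _ hc.length_pos)).1 := by
  obtain ⟨hne, v, hp, hlast⟩ := id hc
  rcases (Nat.succ_le_of_lt hj).lt_or_eq with hj' | hj'
  · have := List.isChain_iff_getElem.1 hp.2.1 j hj'
    simp_all [Nat.mod_eq_of_lt hj']
  · have h0 : (j + 1) % p.length = 0 := by simp [← hj']
    simp only [h0]
    rw [← List.head_eq_getElem hne, hp.2.2 hne, ← hlast, lastV_eq_getLast hne,
      List.getLast_eq_getElem]
    simp [← hj']

lemma IsCycle.exists_periodic_infPath {p : List (V × ℤ × V)} (hc : IsCycle E p) :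
    ∃ π, InfPath E π ∧ Function.Periodic π p.length ∧ (List.range p.length).map π = p := by
  obtain ⟨-, v, hp, -⟩ := id hc
  refine ⟨fun i => p[i % p.length]'(Nat.mod_lt _ hc.length_pos), ⟨?_, ?_⟩, ?_, ?_⟩
  · exact fun i => hp.1 _ (List.getElem_mem _)
  · intro i
    rw [hc.snd_snd_getElem]
    simp [Nat.add_mod]
  · exact fun i => by simp
  · refine List.ext_getElem (by simp) fun i _ hi => ?_
    simp [Nat.mod_eq_of_lt hi]

end Paths

/-- a `W`-graph satisfies mean payoff if and only if it does not
contain any negative cycle. -/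
theorem satMP_iff_no_negative_cycle {W : Finset ℤ} (G : WGraph W) :
    SatMP G.E ↔ ¬ ∃ p, IsCycle G.E p ∧ pathWeight p < 0 := by
  constructor
  · rintro hsat ⟨p, hc, hneg⟩
    obtain ⟨π, hπ, hper, hprefix⟩ := hc.exists_periodic_infPath
    refine not_meanPayoffSeq_of_periodic (hper.comp fun e => e.2.1) hc.length_pos ?_ (hsat π hπ)
    rwa [Function.comp_def, ← pathWeight_map_range, hprefix]
  · intro hnc π hπ
    obtain ⟨m, hm⟩ := W.bddBelow
    have hw : ∀ e ∈ G.E, min m 0 ≤ e.2.1 := fun e he => (min_le_left m 0).trans (hm (G.wt e he))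
    refine meanPayoffSeq_of_forall_le_sum (C := Fintype.card G.V * min m 0) fun ℓ => ?_
    rw [← pathWeight_map_range]
    exact card_mul_le_pathWeight_of_no_negCycle (min_le_right m 0) hw hnc (infPath_prefix hπ ℓ)
end

section
/- Let G be an (n,W)-mean payoff game (a mean payoff game whose underlying graph is an (n,W)-graph) and let A be an (n,W)-separating automaton recognising the language L. Then Eve has a strategy ensuring mean payoff in G if and only if she has a strategy ensuring L in G. -/
open Filter


/-- A mean payoff game: a `W`-graph together with a set of vertices controlled by Eve
(the remaining vertices being controlled by Adam), where every vertex has an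
outgoing edge. -/
structure MPGame (W : Finset ℤ) extends WGraph W where
  EveV : Set V
  succ_exists : ∀ v : V, ∃ e ∈ E, e.1 = v

/-- A strategy for Eve: maps finite paths from the initial vertex (ending in a
vertex controlled by Eve) to an edge whose source is the last vertex of the path. -/
structure Strategy {W : Finset ℤ} (G : MPGame W) where
  f : List (G.V × ℤ × G.V) → G.V × ℤ × G.V
  valid : ∀ p, FinPath G.E G.init p → lastV G.init p ∈ G.EveV →
    f p ∈ G.E ∧ (f p).1 = lastV G.init p

/-- A positional strategy for Eve. -/
structure PosStrategy {W : Finset ℤ} (G : MPGame W) where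
  f : G.V → G.V × ℤ × G.V
  valid : ∀ v ∈ G.EveV, f v ∈ G.E ∧ (f v).1 = v

/-- The strategy induced by a positional strategy: it only looks at the last vertex. -/
def PosStrategy.induced {W : Finset ℤ} {G : MPGame W} (σ : PosStrategy G) :
    Strategy G where
  f := fun p => σ.f (lastV G.init p)
  valid := fun p _ hv => σ.valid _ hv

/-- An infinite path from the initial vertex consistent with a strategy. -/
def ConsistentPath {W : Finset ℤ} {G : MPGame W} (σ : Strategy G)
    (π : ℕ → G.V × ℤ × G.V) : Prop :=
  InfPath G.E π ∧ (π 0).1 = G.init ∧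
    ∀ i, (π i).1 ∈ G.EveV → σ.f ((List.range i).map π) = π i

/-- A strategy ensures mean payoff if every consistent infinite path from the
initial vertex satisfies mean payoff. -/
def EnsuresMP {W : Finset ℤ} {G : MPGame W} (σ : Strategy G) : Prop :=
  ∀ π, ConsistentPath σ π → MeanPayoffSeq (fun i => (π i).2.1)

/-- A deterministic safety automaton over the alphabet `W`. -/
structure SafetyAut (W : Finset ℤ) where
  Q : Type
  fin : Fintype Q
  bot : Q
  qinit : Q
  δ : Q → ℤ → Q
  bot_absorbing : ∀ w ∈ W, δ bot w = bot

attribute [instance] SafetyAut.fin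

/-- The run of the automaton over an infinite word. -/
def SafetyAut.run {W : Finset ℤ} (A : SafetyAut W) (w : ℕ → ℤ) : ℕ → A.Q
  | 0 => A.qinit
  | i + 1 => A.δ (A.run w i) (w i)

/-- The language of the automaton: words over `W` whose run never visits `⊥`. -/
def SafetyAut.Lang {W : Finset ℤ} (A : SafetyAut W) : Set (ℕ → ℤ) :=
  {w | (∀ i, w i ∈ W) ∧ ∀ i, A.run w i ≠ A.bot}

/-- `MP(W)`: the set of infinite words over `W` satisfying mean payoff. -/
def MPlang (W : Finset ℤ) : Set (ℕ → ℤ) :=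
  {w | (∀ i, w i ∈ W) ∧ MeanPayoffSeq w}

/-- `MP_n(W)`: the set of weight sequences of infinite paths of `(n,W)`-graphs
satisfying mean payoff. -/
def MPn (n : ℕ) (W : Finset ℤ) : Set (ℕ → ℤ) :=
  {w | ∃ G : WGraph W, Fintype.card G.V ≤ n ∧ SatMP G.E ∧
    ∃ π, InfPath G.E π ∧ ∀ i, (π i).2.1 = w i}

/-- An `(n,W)`-separating automaton: its language `L` satisfies `MP_n(W) ⊆ L ⊆ MP(W)`. -/
def Separating {W : Finset ℤ} (n : ℕ) (A : SafetyAut W) : Prop :=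
  MPn n W ⊆ A.Lang ∧ A.Lang ⊆ MPlang W

/-- A strategy ensures the language `L` if every consistent infinite path from the
initial vertex has its sequence of weights in `L`. -/
def EnsuresLang {W : Finset ℤ} {G : MPGame W} (σ : Strategy G) (L : Set (ℕ → ℤ)) : Prop :=
  ∀ π, ConsistentPath σ π → (fun i => (π i).2.1) ∈ L
namespace MPAux

variable {V : Type} {E : Set (V × ℤ × V)} {u : V} {p q : List (V × ℤ × V)} {e : V × ℤ × V}

lemma finPath_nil : FinPath E u [] :=
  ⟨by simp, List.IsChain.nil, fun h => absurd rfl h⟩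

@[simp] lemma lastV_nil : lastV u [] = u := rfl

@[simp] lemma lastV_concat : lastV u (p ++ [e]) = e.2.2 := by
  simp [lastV, List.getLastD_concat]

lemma lastV_eq_getLast (h : p ≠ []) : lastV u p = (p.getLast h).2.2 := by
  simp [lastV, List.getLastD_eq_getLast?, List.getLast?_eq_getLast h]

lemma finPath_prefix (h : FinPath E u (p ++ q)) : FinPath E u p := by
  obtain ⟨h1, h2, h3⟩ := h
  refine ⟨fun e he => h1 e (by simp [he]), (List.isChain_append.1 h2).1, fun hne => ?_⟩
  have := h3 (by simp [hne])
  rwa [List.head_append, dif_neg (by simpa using hne)] at this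

lemma finPath_concat_src (h : FinPath E u (p ++ [e])) : e.1 = lastV u p := by
  rcases eq_or_ne p [] with rfl | hne
  · have := h.2.2 (by simp)
    simpa using this
  · have h2 := (List.isChain_append.1 h.2.1).2.2
    have := h2 (p.getLast hne) (by simp [List.getLast?_eq_getLast hne]) e (by simp)
    rw [lastV_eq_getLast hne, this]

lemma lastV_append : lastV u (p ++ q) = lastV (lastV u p) q := by
  induction q using List.reverseRecOn with
  | nil => simp
  | append_singleton q e ih =>
    rw [← List.append_assoc, lastV_concat, lastV_concat]

lemma finPath_concat (hp : FinPath E u p) (he : e ∈ E) (h1 : e.1 = lastV u p) :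
    FinPath E u (p ++ [e]) := by
  obtain ⟨m1, m2, m3⟩ := hp
  refine ⟨?_, ?_, ?_⟩
  · intro x hx; rcases List.mem_append.1 hx with h | h
    · exact m1 x h
    · simp at h; subst h; exact he
  · rw [show List.Chain' _ (p ++ [e]) ↔ List.IsChain _ _ from Iff.rfl, List.isChain_append]
    refine ⟨m2, by simp, ?_⟩
    intro x hx y hy
    simp at hy; subst hy
    rcases eq_or_ne p [] with rfl | hne
    · simp at hx
    · rw [List.getLast?_eq_getLast hne] at hx
      simp at hx; subst hx
      rw [h1, lastV_eq_getLast hne]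
  · intro hne
    rcases eq_or_ne p [] with rfl | hpe
    · simpa using h1.trans lastV_nil
    · rw [List.head_append, dif_neg (by simpa using hpe)]
      exact m3 hpe

lemma finPath_append (hp : FinPath E u p) (hq : FinPath E (lastV u p) q) :
    FinPath E u (p ++ q) := by
  induction q using List.reverseRecOn with
  | nil => simpa
  | append_singleton q e ih =>
    rw [← List.append_assoc]
    refine finPath_concat (ih (finPath_prefix hq)) (hq.1 e (by simp)) ?_
    rw [lastV_append]
    exact finPath_concat_src hq

lemma finPath_range_map {π : ℕ → V × ℤ × V} (h : InfPath E π) (hu : (π 0).1 = u) (ℓ : ℕ) :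
    FinPath E u ((List.range ℓ).map π) := by
  refine ⟨fun e he => ?_, ?_, ?_⟩
  · simp at he; obtain ⟨i, _, rfl⟩ := he; exact h.1 i
  · rw [show List.Chain' _ _ ↔ List.IsChain _ _ from Iff.rfl, List.isChain_iff_getElem]
    intro i hi
    simp only [List.get_eq_getElem, List.getElem_map, List.getElem_range]
    exact h.2 i
  · intro hne
    have hℓ : 0 < ℓ := by
      by_contra hc
      simp at hc; subst hc; simp at hne
    have : ((List.range ℓ).map π).head hne = π 0 := by
      have : 0 < ((List.range ℓ).map π).length := by simpa using hℓ
      rw [← List.getElem_zero this]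
      simp
    rw [this, hu]

lemma lastV_range_map {π : ℕ → V × ℤ × V} (h : InfPath E π) (hu : (π 0).1 = u) (i : ℕ) :
    lastV u ((List.range i).map π) = (π i).1 := by
  induction i with
  | zero => simpa using hu.symm
  | succ i ih =>
    rw [List.range_succ, List.map_append]
    simpa using (h.2 i).symm ▸ rfl

@[simp] lemma pathWeight_nil : pathWeight ([] : List (V × ℤ × V)) = 0 := rfl

lemma pathWeight_append : pathWeight (p ++ q) = pathWeight p + pathWeight q := by
  simp [pathWeight]

lemma pathWeight_range_map (π : ℕ → V × ℤ × V) (ℓ : ℕ) :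
    pathWeight ((List.range ℓ).map π) = ∑ i ∈ Finset.range ℓ, (π i).2.1 := by
  induction ℓ with
  | zero => simp [pathWeight]
  | succ ℓ ih => rw [List.range_succ, List.map_append, pathWeight_append, Finset.sum_range_succ, ih]; simp [pathWeight]

end MPAux
namespace MPAux

open OrderHom

/-- truncated subtraction on `ℕ∞` by an integer -/
def esub (a : ℕ∞) (w : ℤ) : ℕ∞ := a.map (fun n : ℕ => ((n : ℤ) - w).toNat)

@[simp] lemma esub_top (w : ℤ) : esub ⊤ w = ⊤ := rfl

@[simp] lemma esub_coe (n : ℕ) (w : ℤ) : esub (n : ℕ∞) w = (((n : ℤ) - w).toNat : ℕ∞) := rfl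

lemma esub_eq_top_iff {a : ℕ∞} {w : ℤ} : esub a w = ⊤ ↔ a = ⊤ := by
  cases a with
  | top => simp
  | coe n => simp

lemma esub_mono {a b : ℕ∞} (w : ℤ) (h : a ≤ b) : esub a w ≤ esub b w := by
  cases a with
  | top => rw [top_le_iff.1 h]
  | coe n =>
    cases b with
    | top => simp
    | coe m =>
      have : n ≤ m := by exact_mod_cast h
      simp only [esub_coe, Nat.cast_le]
      exact Int.toNat_le_toNat (by omega)

variable {W : Finset ℤ} (G : MPGame W)

/-- edges from a vertex -/
def fromE (v : G.V) : Set (G.V × ℤ × G.V) := {e ∈ G.E | e.1 = v}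

lemma fromE_nonempty (v : G.V) : (fromE G v).Nonempty := by
  obtain ⟨e, he, hs⟩ := G.succ_exists v
  exact ⟨e, he, hs⟩

lemma E_finite : G.E.Finite := by
  have : G.E ⊆ (Set.univ : Set G.V) ×ˢ ((W : Set ℤ) ×ˢ (Set.univ : Set G.V)) := by
    intro e he
    exact ⟨trivial, G.wt e he, trivial⟩
  exact Set.Finite.subset (Set.finite_univ.prod ((W.finite_toSet).prod Set.finite_univ)) this

lemma fromE_finite (v : G.V) : (fromE G v).Finite :=
  (E_finite G).subset (fun e he => he.1)

open Classical in
/-- the energy lifting operator -/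
noncomputable def Phi : (G.V → ℕ∞) →o (G.V → ℕ∞) where
  toFun f := fun v =>
    if v ∈ G.EveV then sInf ((fun e => esub (f e.2.2) e.2.1) '' fromE G v)
    else sSup ((fun e => esub (f e.2.2) e.2.1) '' fromE G v)
  monotone' := by
    intro f f' hff v
    dsimp only
    split
    · apply le_sInf
      rintro b ⟨e, he, rfl⟩
      exact sInf_le_of_le ⟨e, he, rfl⟩ (esub_mono _ (hff e.2.2))
    · apply sSup_le
      rintro b ⟨e, he, rfl⟩
      exact le_sSup_of_le ⟨e, he, rfl⟩ (esub_mono _ (hff e.2.2))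

/-- the least fixpoint: minimal energy needed by Eve -/
noncomputable def gE : G.V → ℕ∞ := OrderHom.lfp (Phi G)

lemma gE_fixed : Phi G (gE G) = gE G := OrderHom.map_lfp (Phi G)

lemma gE_eve (v : G.V) (hv : v ∈ G.EveV) :
    gE G v = sInf ((fun e => esub (gE G e.2.2) e.2.1) '' fromE G v) := by
  conv_lhs => rw [← gE_fixed G]
  exact if_pos hv

lemma gE_adam (v : G.V) (hv : v ∉ G.EveV) :
    gE G v = sSup ((fun e => esub (gE G e.2.2) e.2.1) '' fromE G v) := by
  conv_lhs => rw [← gE_fixed G]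
  exact if_neg hv

lemma eve_all_top {v : G.V} (hv : v ∈ G.EveV) (ht : gE G v = ⊤) :
    ∀ e ∈ fromE G v, gE G e.2.2 = ⊤ := by
  intro e he
  rw [gE_eve G v hv] at ht
  have := sInf_eq_top.1 ht _ ⟨e, he, rfl⟩
  exact esub_eq_top_iff.1 this

lemma adam_exists_top {v : G.V} (hv : v ∉ G.EveV) (ht : gE G v = ⊤) :
    ∃ e ∈ fromE G v, gE G e.2.2 = ⊤ := by
  rw [gE_adam G v hv] at ht
  have hne : ((fun e => esub (gE G e.2.2) e.2.1) '' fromE G v).Nonempty :=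
    (fromE_nonempty G v).image _
  have hfin : ((fun e => esub (gE G e.2.2) e.2.1) '' fromE G v).Finite :=
    (fromE_finite G v).image _
  have := hne.csSup_mem hfin
  rw [ht] at this
  obtain ⟨e, he, hee⟩ := this
  exact ⟨e, he, esub_eq_top_iff.1 hee⟩

lemma eve_exists_le {v : G.V} (hv : v ∈ G.EveV) :
    ∃ e ∈ fromE G v, esub (gE G e.2.2) e.2.1 ≤ gE G v := by
  have hne : ((fun e => esub (gE G e.2.2) e.2.1) '' fromE G v).Nonempty :=
    (fromE_nonempty G v).image _
  have hfin : ((fun e => esub (gE G e.2.2) e.2.1) '' fromE G v).Finite :=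
    (fromE_finite G v).image _
  have := hne.csInf_mem hfin
  obtain ⟨e, he, hee⟩ := this
  refine ⟨e, he, ?_⟩
  rw [gE_eve G v hv, ← hee]

lemma adam_all_le {v : G.V} (hv : v ∉ G.EveV) :
    ∀ e ∈ fromE G v, esub (gE G e.2.2) e.2.1 ≤ gE G v := by
  intro e he
  rw [gE_adam G v hv]
  exact le_sSup ⟨e, he, rfl⟩

end MPAux
namespace MPAux

variable {W : Finset ℤ}

/-- global bound on absolute values of weights -/
def Mw (W : Finset ℤ) : ℕ := W.sup Int.natAbs

lemma wt_bound (G : MPGame W) {e : G.V × ℤ × G.V} (he : e ∈ G.E) : e.2.1.natAbs ≤ Mw W :=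
  Finset.le_sup (G.wt e he)

variable (G : MPGame W)

/-- the good subgraph induced by the energy function -/
def Egood : Set (G.V × ℤ × G.V) :=
  {e | e ∈ G.E ∧ esub (gE G e.2.2) e.2.1 ≤ gE G e.1 ∧ gE G e.1 ≠ ⊤}

lemma egood_sub : Egood G ⊆ G.E := fun _ h => h.1

lemma egood_tgt_ne_top {e : G.V × ℤ × G.V} (he : e ∈ Egood G) : gE G e.2.2 ≠ ⊤ := by
  intro h
  exact he.2.2 (top_le_iff.1 ((esub_eq_top_iff.2 h ▸ he.2.1 : (⊤:ℕ∞) ≤ _)))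

lemma egood_step {e : G.V × ℤ × G.V} (he : e ∈ Egood G) :
    ((gE G e.2.2).toNat : ℤ) ≤ ((gE G e.1).toNat : ℤ) + e.2.1 := by
  obtain ⟨n, hn⟩ : ∃ n : ℕ, gE G e.2.2 = n := by
    cases h : gE G e.2.2 with
    | top => exact absurd h (egood_tgt_ne_top G he)
    | coe n => exact ⟨n, rfl⟩
  obtain ⟨m, hm⟩ : ∃ m : ℕ, gE G e.1 = m := by
    cases h : gE G e.1 with
    | top => exact absurd h he.2.2
    | coe m => exact ⟨m, rfl⟩
  have h1 := he.2.1
  rw [hn, hm, esub_coe, Nat.cast_le] at h1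
  have h2 : (n : ℤ) - e.2.1 ≤ ((n : ℤ) - e.2.1).toNat := Int.self_le_toNat _
  have h3 : (((n : ℤ) - e.2.1).toNat : ℤ) ≤ m := by exact_mod_cast h1
  rw [hn, hm]
  simp only [ENat.toNat_coe]
  omega

lemma egood_telescope {u : G.V} : ∀ p, FinPath (Egood G) u p →
    ((gE G (lastV u p)).toNat : ℤ) ≤ ((gE G u).toNat : ℤ) + pathWeight p := by
  intro p
  induction p using List.reverseRecOn with
  | nil => simp
  | append_singleton p e ih =>
    intro h
    have hp := finPath_prefix h
    have he : e ∈ Egood G := h.1 e (by simp)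
    have hsrc : e.1 = lastV u p := finPath_concat_src h
    have := egood_step G he
    rw [hsrc] at this
    have hi := ih hp
    rw [lastV_concat, pathWeight_append]
    have hw : pathWeight [e] = e.2.1 := by simp [pathWeight]
    omega

lemma egood_sum_lb {u : G.V} (p : List (G.V × ℤ × G.V)) (hp : FinPath (Egood G) u p) :
    -((gE G u).toNat : ℤ) ≤ pathWeight p := by
  have := egood_telescope G p hp
  have h0 : (0:ℤ) ≤ ((gE G (lastV u p)).toNat : ℤ) := by positivity
  omega

end MPAux
namespace MPAux
open Filter

lemma avg_le (w : ℕ → ℤ) (M : ℕ) (h : ∀ i, w i ≤ (M:ℤ)) (ℓ : ℕ) :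
    (∑ i ∈ Finset.range ℓ, (w i : ℝ)) / (ℓ : ℝ) ≤ M := by
  rcases Nat.eq_zero_or_pos ℓ with rfl | hl
  · simp
  · rw [div_le_iff₀ (by exact_mod_cast hl)]
    have : (∑ i ∈ Finset.range ℓ, (w i : ℝ)) ≤ ∑ _i ∈ Finset.range ℓ, (M:ℝ) := by
      apply Finset.sum_le_sum
      intro i _
      exact_mod_cast h i
    rw [mul_comm]
    simpa using this

lemma avg_ge (w : ℕ → ℤ) (M : ℕ) (h : ∀ i, -(M:ℤ) ≤ w i) (ℓ : ℕ) :
    -(M:ℝ) ≤ (∑ i ∈ Finset.range ℓ, (w i : ℝ)) / (ℓ : ℝ) := by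
  rcases Nat.eq_zero_or_pos ℓ with rfl | hl
  · simp
  · rw [le_div_iff₀ (by exact_mod_cast hl)]
    have : (∑ _i ∈ Finset.range ℓ, -(M:ℝ)) ≤ ∑ i ∈ Finset.range ℓ, (w i : ℝ) := by
      apply Finset.sum_le_sum
      intro i _
      exact_mod_cast h i
    simp only [Finset.sum_const, Finset.card_range, nsmul_eq_mul] at this
    calc -(M:ℝ) * ℓ = ℓ * -(M:ℝ) := by ring
    _ ≤ _ := this

lemma meanPayoffSeq_of_bddBelow (w : ℕ → ℤ) (M : ℕ) (hub : ∀ i, w i ≤ (M:ℤ)) (C : ℤ)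
    (h : ∀ ℓ, C ≤ ∑ i ∈ Finset.range ℓ, w i) : MeanPayoffSeq w := by
  set v : ℕ → ℝ := fun ℓ : ℕ => (∑ i ∈ Finset.range ℓ, (w i : ℝ)) / (ℓ : ℝ) with hv
  set u : ℕ → ℝ := fun ℓ : ℕ => (C : ℝ) / (ℓ : ℝ) with hu
  have htend : Tendsto u atTop (nhds 0) := tendsto_const_div_atTop_nhds_zero_nat (C : ℝ)
  have h0 : liminf u atTop = 0 := htend.liminf_eq
  have hle : ∀ᶠ ℓ in atTop, u ℓ ≤ v ℓ := by
    filter_upwards [eventually_ge_atTop 1] with ℓ hl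
    have hpos : (0:ℝ) < ℓ := by exact_mod_cast hl
    have hnum : (C:ℝ) ≤ ∑ i ∈ Finset.range ℓ, (w i : ℝ) := by exact_mod_cast h ℓ
    simp only [hu, hv]
    exact div_le_div_of_nonneg_right hnum hpos.le
  have hbdd : IsBoundedUnder (· ≥ ·) atTop u := htend.isBoundedUnder_ge
  have hcob : IsCoboundedUnder (· ≥ ·) atTop v := by
    apply Filter.IsBoundedUnder.isCoboundedUnder_ge
    refine ⟨(M:ℝ), ?_⟩
    simp only [Filter.eventually_map]
    exact Filter.Eventually.of_forall (avg_le w M hub)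
  have := liminf_le_liminf hle hbdd hcob
  rw [h0] at this
  exact this

end MPAux
namespace MPAux
open Filter

lemma not_meanPayoffSeq_of_drops (w : ℕ → ℤ) (M : ℕ) (hlb : ∀ i, -(M:ℤ) ≤ w i)
    (N : ℕ) (hN : 0 < N) (t : ℕ → ℕ) (ht1 : ∀ j, j ≤ t j) (ht2 : ∀ j, t j ≤ j * N)
    (hs : ∀ j, (∑ i ∈ Finset.range (t j), w i) ≤ -(j:ℤ)) : ¬ MeanPayoffSeq w := by
  intro hmp
  set v : ℕ → ℝ := fun ℓ : ℕ => (∑ i ∈ Finset.range ℓ, (w i : ℝ)) / (ℓ : ℝ) with hv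
  have key : liminf v atTop ≤ -(1 / (N:ℝ)) := by
    apply liminf_le_of_frequently_le
    · rw [frequently_atTop]
      intro a
      refine ⟨t (a+1), le_trans (by omega) (ht1 (a+1)), ?_⟩
      have htpos : 0 < t (a+1) := lt_of_lt_of_le (Nat.succ_pos a) (ht1 (a+1))
      have htposR : (0:ℝ) < (t (a+1) : ℝ) := by exact_mod_cast htpos
      have hsum : (∑ i ∈ Finset.range (t (a+1)), (w i : ℝ)) ≤ -((a:ℝ)+1) := by
        have h := hs (a+1)
        have h' : ((∑ i ∈ Finset.range (t (a+1)), w i : ℤ) : ℝ) ≤ ((-(((a:ℕ)+1) : ℤ)) : ℝ) := by exact_mod_cast h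
        push_cast at h'
        linarith
      rw [hv]
      rw [div_le_iff₀ htposR]
      have h2 : (t (a+1) : ℝ) ≤ ((a:ℝ)+1) * N := by
        have h := ht2 (a+1)
        have h' : ((t (a+1) : ℕ) : ℝ) ≤ (((a+1) * N : ℕ) : ℝ) := by exact_mod_cast h
        push_cast at h'
        linarith
      have hNR : (0:ℝ) < (N:ℝ) := by exact_mod_cast hN
      calc (∑ i ∈ Finset.range (t (a+1)), (w i : ℝ)) ≤ -((a:ℝ)+1) := hsum
        _ ≤ -(1/(N:ℝ)) * (t (a+1)) := by
            rw [neg_mul, le_neg, neg_neg]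
            rw [one_div, inv_mul_eq_div, div_le_iff₀ hNR]
            linarith
    · exact ⟨-(M:ℝ), by
        simp only [Filter.eventually_map]
        exact Filter.Eventually.of_forall (avg_ge w M hlb)⟩
  have hNR : (0:ℝ) < (N:ℝ) := by exact_mod_cast hN
  have : (0:ℝ) ≤ -(1/(N:ℝ)) := le_trans hmp key
  have : (0:ℝ) < 1/(N:ℝ) := by positivity
  linarith

end MPAux
namespace MPAux
open Filter

variable {W : Finset ℤ} (G : MPGame W)

lemma wt_le (e : G.V × ℤ × G.V) (he : e ∈ G.E) : e.2.1 ≤ (Mw W : ℤ) := by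
  have := wt_bound G he
  omega

lemma wt_ge (e : G.V × ℤ × G.V) (he : e ∈ G.E) : -(Mw W : ℤ) ≤ e.2.1 := by
  have := wt_bound G he
  have h2 : e.2.1.natAbs ≤ (Mw W) := this
  omega

/-- vertices reachable from the initial vertex inside the good subgraph -/
def VH : Set G.V := {v | ∃ p, FinPath (Egood G) G.init p ∧ lastV G.init p = v}

lemma init_mem_VH : G.init ∈ VH G := ⟨[], finPath_nil, rfl⟩

lemma VH_closed {e : G.V × ℤ × G.V} (hv : e.1 ∈ VH G) (he : e ∈ Egood G) : e.2.2 ∈ VH G := by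
  obtain ⟨p, hp, hl⟩ := hv
  exact ⟨p ++ [e], finPath_concat hp he (by rw [hl]), lastV_concat⟩

/-- the lifted edge set on the subtype of reachable good vertices -/
def EH : Set ({v : G.V // v ∈ VH G} × ℤ × {v : G.V // v ∈ VH G}) :=
  {e | (e.1.1, e.2.1, e.2.2.1) ∈ Egood G}

lemma lift_path : ∀ p, FinPath (Egood G) G.init p →
    ∃ q : List ({v : G.V // v ∈ VH G} × ℤ × {v : G.V // v ∈ VH G}),
      FinPath (EH G) ⟨G.init, init_mem_VH G⟩ q ∧
      (lastV ⟨G.init, init_mem_VH G⟩ q).1 = lastV G.init p := by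
  intro p
  induction p using List.reverseRecOn with
  | nil => exact fun _ => ⟨[], finPath_nil, rfl⟩
  | append_singleton p e ih =>
    intro h
    have hp := finPath_prefix h
    obtain ⟨q, hq, hlast⟩ := ih hp
    have he : e ∈ Egood G := h.1 e (by simp)
    have hsrc : e.1 = lastV G.init p := finPath_concat_src h
    have hm1 : e.1 ∈ VH G := ⟨p, hp, hsrc.symm⟩
    have hm2 : e.2.2 ∈ VH G := VH_closed G hm1 he
    refine ⟨q ++ [(⟨e.1, hm1⟩, e.2.1, ⟨e.2.2, hm2⟩)], ?_, by simp [lastV_concat]⟩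
    refine finPath_concat hq ?_ ?_
    · show (e.1, e.2.1, e.2.2) ∈ Egood G
      simpa using he
    · apply Subtype.ext
      simp [hlast, hsrc]

lemma EH_reach : ∀ v : {v : G.V // v ∈ VH G}, ∃ p, FinPath (EH G) ⟨G.init, init_mem_VH G⟩ p ∧
    lastV ⟨G.init, init_mem_VH G⟩ p = v := by
  rintro ⟨v, hv⟩
  obtain ⟨p, hp, hl⟩ := hv
  obtain ⟨q, hq, hlast⟩ := lift_path G p hp
  exact ⟨q, hq, Subtype.ext (hlast.trans hl)⟩

/-- the witnessing small graph -/
noncomputable def HG : WGraph W where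
  V := {v : G.V // v ∈ VH G}
  fin := @Subtype.fintype _ _ (Classical.decPred _) _
  E := EH G
  init := ⟨G.init, init_mem_VH G⟩
  wt := fun e he => G.wt _ (egood_sub G he)
  reach := EH_reach G

lemma HG_card (n : ℕ) (hG : Fintype.card G.V ≤ n) : Fintype.card (HG G).V ≤ n :=
  le_trans (Fintype.card_le_of_injective Subtype.val Subtype.val_injective) hG

lemma egood_infpath_mp {π : ℕ → G.V × ℤ × G.V} (h : InfPath (Egood G) π)
    (w : ℕ → ℤ) (hw : ∀ i, (π i).2.1 = w i) : MeanPayoffSeq w := by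
  have hfw : (fun i => (π i).2.1) = w := funext hw
  rw [← hfw]
  refine meanPayoffSeq_of_bddBelow _ (Mw W) (fun i => wt_le G _ (egood_sub G (h.1 i)))
    (-(((gE G (π 0).1).toNat : ℤ))) (fun ℓ => ?_)
  have hfp := finPath_range_map h rfl ℓ
  have hlb := egood_sum_lb G _ hfp
  rwa [pathWeight_range_map] at hlb

lemma HG_satMP : SatMP (HG G).E := by
  intro π hπ
  have : InfPath (Egood G) (fun i => ((π i).1.1, (π i).2.1, (π i).2.2.1)) := by
    refine ⟨fun i => hπ.1 i, fun i => ?_⟩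
    exact congrArg Subtype.val (hπ.2 i)
  exact egood_infpath_mp G this _ (fun i => rfl)

lemma good_choice {v : G.V} (hv : v ∈ G.EveV) (hne : gE G v ≠ ⊤) :
    ∃ e ∈ Egood G, e.1 = v := by
  obtain ⟨e, he, hle⟩ := eve_exists_le G hv
  refine ⟨e, ⟨he.1, ?_, ?_⟩, he.2⟩
  · rw [he.2]; exact hle
  · rw [he.2]; exact hne

open Classical in
/-- the strategy following the good subgraph -/
noncomputable def sigmaA : Strategy G where
  f := fun p =>
    if h : lastV G.init p ∈ G.EveV ∧ gE G (lastV G.init p) ≠ ⊤ then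
      Classical.choose (good_choice G h.1 h.2)
    else Classical.choose (G.succ_exists (lastV G.init p))
  valid := by
    intro p _ hv
    split
    · rename_i h
      obtain ⟨he, hsrc⟩ := Classical.choose_spec (good_choice G h.1 h.2)
      exact ⟨egood_sub G he, hsrc⟩
    · obtain ⟨he, hsrc⟩ := Classical.choose_spec (G.succ_exists (lastV G.init p))
      exact ⟨he, hsrc⟩

lemma sigmaA_ensures (hfin : gE G G.init ≠ ⊤) {π : ℕ → G.V × ℤ × G.V}
    (hπ : ConsistentPath (sigmaA G) π) : (∀ i, π i ∈ Egood G) ∧ (∀ i, (π i).1 ∈ VH G) := by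
  classical
  obtain ⟨hip, h0, hcons⟩ := hπ
  have key : ∀ i, gE G (π i).1 ≠ ⊤ → π i ∈ Egood G := by
    intro i hne
    by_cases hEve : (π i).1 ∈ G.EveV
    · have hc := hcons i hEve
      have hl : lastV G.init ((List.range i).map π) = (π i).1 := lastV_range_map hip h0 i
      rw [show sigmaA G = sigmaA G from rfl] at hc
      unfold sigmaA at hc
      dsimp only at hc
      rw [dif_pos (by rw [hl]; exact ⟨hEve, hne⟩)] at hc
      obtain ⟨he, hsrc⟩ := Classical.choose_spec (good_choice G (v := lastV G.init ((List.range i).map π)) (by rw [hl]; exact hEve) (by rw [hl]; exact hne))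
      rw [← hc]
      exact he
    · exact ⟨hip.1 i, adam_all_le G hEve _ ⟨hip.1 i, rfl⟩, hne⟩
  have hnet : ∀ i, gE G (π i).1 ≠ ⊤ := by
    intro i
    induction i with
    | zero => rw [h0]; exact hfin
    | succ i ih =>
      have := egood_tgt_ne_top G (key i ih)
      rwa [hip.2 i] at this
  have hgood : ∀ i, π i ∈ Egood G := fun i => key i (hnet i)
  refine ⟨hgood, fun i => ?_⟩
  induction i with
  | zero => rw [h0]; exact init_mem_VH G
  | succ i ih =>
    have := VH_closed G ih (hgood i)
    rwa [hip.2 i] at this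

theorem sideA (n : ℕ) (hG : Fintype.card G.V ≤ n) (A : SafetyAut W) (hA : Separating n A)
    (hfin : gE G G.init ≠ ⊤) : ∃ σ : Strategy G, EnsuresLang σ A.Lang := by
  refine ⟨sigmaA G, ?_⟩
  intro π hπ
  obtain ⟨hgood, hvh⟩ := sigmaA_ensures G hfin hπ
  have hvh2 : ∀ i, (π i).2.2 ∈ VH G := fun i => VH_closed G (hvh i) (hgood i)
  apply hA.1
  refine ⟨HG G, HG_card G n hG, HG_satMP G, fun i => ((⟨(π i).1, hvh i⟩, (π i).2.1, ⟨(π i).2.2, hvh2 i⟩) : (HG G).V × ℤ × (HG G).V), ⟨?_, ?_⟩, fun i => rfl⟩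
  · intro i
    show ((π i).1, (π i).2.1, (π i).2.2) ∈ Egood G
    simpa using hgood i
  · intro i
    exact Subtype.ext (hπ.1.2 i)

end MPAux
namespace MPAux

variable {V : Type}

/-- Adam can force the energy (starting credit `c`) to become negative,
staying within edge set `E'`. -/
inductive DiesI (E' : Set (V × ℤ × V)) (Ev : Set V) : V → ℤ → Prop
  | eve {v c} : v ∈ Ev →
      (∀ e ∈ E', e.1 = v → 0 ≤ c + e.2.1 → DiesI E' Ev e.2.2 (c + e.2.1)) → DiesI E' Ev v c
  | adam_dead {v c e} : v ∉ Ev → e ∈ E' → e.1 = v → c + e.2.1 < 0 → DiesI E' Ev v c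
  | adam_step {v c e} : v ∉ Ev → e ∈ E' → e.1 = v → DiesI E' Ev e.2.2 (c + e.2.1) →
      DiesI E' Ev v c

/-- fueled version: Adam forces death within `k` steps -/
def DiesIn (E' : Set (V × ℤ × V)) (Ev : Set V) : ℕ → V → ℤ → Prop
  | 0, _, _ => False
  | (k+1), v, c =>
      (v ∈ Ev → ∀ e ∈ E', e.1 = v → (0 ≤ c + e.2.1 → DiesIn E' Ev k e.2.2 (c + e.2.1))) ∧
      (v ∉ Ev → ∃ e ∈ E', e.1 = v ∧ (c + e.2.1 < 0 ∨ DiesIn E' Ev k e.2.2 (c + e.2.1)))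

lemma diesIn_mono {E' : Set (V × ℤ × V)} {Ev : Set V} :
    ∀ {k k' : ℕ}, k ≤ k' → ∀ {v c}, DiesIn E' Ev k v c → DiesIn E' Ev k' v c := by
  intro k
  induction k with
  | zero => intro k' _ v c h; exact absurd h id
  | succ k ih =>
    intro k' hk v c h
    obtain ⟨k'', rfl⟩ : ∃ k'', k' = k'' + 1 := ⟨k' - 1, by omega⟩
    refine ⟨fun hv e he hsrc hge => ih (by omega) (h.1 hv e he hsrc hge), fun hv => ?_⟩
    obtain ⟨e, he, hsrc, hd⟩ := h.2 hv
    exact ⟨e, he, hsrc, hd.imp id (ih (by omega))⟩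

lemma exists_uniform {α : Type*} {s : Set α} (hs : s.Finite) (P : α → ℕ → Prop)
    (mono : ∀ a {k k'}, k ≤ k' → P a k → P a k') (h : ∀ a ∈ s, ∃ k, P a k) :
    ∃ k, ∀ a ∈ s, P a k := by
  refine Set.Finite.induction_on (motive := fun t _ => (∀ a ∈ t, ∃ k, P a k) → ∃ k, ∀ a ∈ t, P a k)
    s hs (fun _ => ⟨0, by simp⟩) ?_ h
  intro a t ha hft ih hall
  obtain ⟨k1, hk1⟩ := ih (fun b hb => hall b (Set.mem_insert_of_mem _ hb))
  obtain ⟨k2, hk2⟩ := hall a (Set.mem_insert _ _)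
  refine ⟨max k1 k2, ?_⟩
  rintro b (rfl | hb)
  · exact mono _ (le_max_right _ _) hk2
  · exact mono _ (le_max_left _ _) (hk1 b hb)

lemma diesI_fuel {E' : Set (V × ℤ × V)} {Ev : Set V} (hfin : E'.Finite) {v c}
    (h : DiesI E' Ev v c) : ∃ k, DiesIn E' Ev k v c := by
  induction h with
  | @eve v c hv hstep ih =>
    have : ∀ e ∈ {e ∈ E' | e.1 = v ∧ 0 ≤ c + e.2.1}, ∃ k, DiesIn E' Ev k e.2.2 (c + e.2.1) :=
      fun e he => ih e he.1 he.2.1 he.2.2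
    obtain ⟨k, hk⟩ := exists_uniform (hfin.subset (fun e he => he.1))
      (fun e k => DiesIn E' Ev k e.2.2 (c + e.2.1)) (fun e _ _ hkk hP => diesIn_mono hkk hP) this
    exact ⟨k + 1, fun _ e he hsrc hge => hk e ⟨he, hsrc, hge⟩, fun hv' => absurd hv hv'⟩
  | adam_dead hv he hsrc hdead =>
    exact ⟨1, fun hv' => absurd hv' hv, fun _ => ⟨_, he, hsrc, Or.inl hdead⟩⟩
  | adam_step hv he hsrc _ ih =>
    obtain ⟨k, hk⟩ := ih
    exact ⟨k + 1, fun hv' => absurd hv' hv, fun _ => ⟨_, he, hsrc, Or.inr hk⟩⟩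

end MPAux
namespace MPAux

variable {W : Finset ℤ} (G : MPGame W)

/-- the region where Eve's energy requirement is infinite -/
def EDset : Set (G.V × ℤ × G.V) := {e | e ∈ G.E ∧ gE G e.1 = ⊤ ∧ gE G e.2.2 = ⊤}

lemma EDset_sub : EDset G ⊆ G.E := fun _ h => h.1

noncomputable def BB : ℕ := (Finset.univ.sup fun v : G.V => (gE G v).toNat) + Mw W

lemma esub_le_BB {e : G.V × ℤ × G.V} (he : e ∈ G.E) (ht : gE G e.2.2 ≠ ⊤) :
    esub (gE G e.2.2) e.2.1 ≤ ((BB G : ℕ) : ℕ∞) := by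
  obtain ⟨m, hm⟩ : ∃ m : ℕ, gE G e.2.2 = m := by
    cases h : gE G e.2.2 with
    | top => exact absurd h ht
    | coe m => exact ⟨m, rfl⟩
  have hmle : m ≤ Finset.univ.sup fun v : G.V => (gE G v).toNat := by
    have := Finset.le_sup (f := fun v : G.V => (gE G v).toNat) (Finset.mem_univ e.2.2)
    simp only [hm, ENat.toNat_coe] at this
    exact this
  have hw := wt_bound G he
  rw [hm, esub_coe, Nat.cast_le]
  unfold BB
  omega

def survS (v : G.V) : Set ℕ := {m : ℕ | ¬ DiesI (EDset G) G.EveV v (m : ℤ)}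

open Classical in
noncomputable def hpp : G.V → ℕ∞ := fun v =>
  if gE G v = ⊤ then (⨅ m ∈ survS G v, (m : ℕ∞)) + ((BB G : ℕ) : ℕ∞) else gE G v

lemma hpp_le : hpp G ≤ gE G := by
  intro v
  unfold hpp
  split
  · rename_i h; rw [h]; exact le_top
  · exact le_rfl

lemma esub_coe_le {m BBn : ℕ} {w : ℤ} (hge : 0 ≤ (m : ℤ) + w) (a : ℕ∞)
    (ha : a ≤ ((((m : ℤ) + w).toNat + BBn : ℕ) : ℕ∞)) :
    esub a w ≤ ((m + BBn : ℕ) : ℕ∞) := by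
  refine le_trans (esub_mono w ha) ?_
  rw [esub_coe, Nat.cast_le]
  omega

lemma hpp_tgt_le {e : G.V × ℤ × G.V} (heED : e ∈ EDset G) {m₀ : ℕ}
    (hge : 0 ≤ (m₀ : ℤ) + e.2.1) (hnd : ¬ DiesI (EDset G) G.EveV e.2.2 ((m₀ : ℤ) + e.2.1)) :
    esub (hpp G e.2.2) e.2.1 ≤ ((m₀ + BB G : ℕ) : ℕ∞) := by
  have htgt : gE G e.2.2 = ⊤ := heED.2.2
  have hmem : (((m₀ : ℤ) + e.2.1).toNat) ∈ survS G e.2.2 := by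
    show ¬ DiesI _ _ _ _
    rwa [Int.toNat_of_nonneg hge]
  have h1 : (⨅ m ∈ survS G e.2.2, (m : ℕ∞)) ≤ ((((m₀ : ℤ) + e.2.1).toNat : ℕ) : ℕ∞) :=
    iInf₂_le _ hmem
  have h2 : hpp G e.2.2 ≤ (((((m₀ : ℤ) + e.2.1).toNat + BB G : ℕ)) : ℕ∞) := by
    rw [hpp, if_pos htgt, Nat.cast_add]
    exact add_le_add_left h1 _
  exact esub_coe_le hge _ h2

lemma hpp_prefix : Phi G (hpp G) ≤ hpp G := by
  classical
  intro v
  by_cases hD : gE G v = ⊤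
  · by_cases hs : (survS G v).Nonempty
    · set m₀ := sInf (survS G v) with hm₀def
      have hm₀ : ¬ DiesI (EDset G) G.EveV v (m₀ : ℤ) := Nat.sInf_mem hs
      have hIv : (⨅ m ∈ survS G v, (m : ℕ∞)) = (m₀ : ℕ∞) := by
        refine le_antisymm (iInf₂_le _ (Nat.sInf_mem hs)) (le_iInf₂ fun m hm => ?_)
        exact_mod_cast Nat.sInf_le hm
      have hval : hpp G v = ((m₀ + BB G : ℕ) : ℕ∞) := by
        rw [hpp, if_pos hD, hIv, Nat.cast_add]
      rw [hval]
      by_cases hv : v ∈ G.EveV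
      · have hPhi : Phi G (hpp G) v
            = sInf ((fun e => esub (hpp G e.2.2) e.2.1) '' fromE G v) := by
          exact if_pos hv
        rw [hPhi]
        have : ¬ ∀ e ∈ EDset G, e.1 = v → 0 ≤ (m₀ : ℤ) + e.2.1 →
            DiesI (EDset G) G.EveV e.2.2 ((m₀ : ℤ) + e.2.1) :=
          fun hall => hm₀ (DiesI.eve hv hall)
        push_neg at this
        obtain ⟨e, heED, hsrc, hge, hnd⟩ := this
        refine sInf_le_of_le ⟨e, ⟨heED.1, hsrc⟩, rfl⟩ ?_
        exact hpp_tgt_le G heED hge hnd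
      · have hPhi : Phi G (hpp G) v
            = sSup ((fun e => esub (hpp G e.2.2) e.2.1) '' fromE G v) := by
          exact if_neg hv
        rw [hPhi]
        apply sSup_le
        rintro b ⟨e, hef, rfl⟩
        show esub (hpp G e.2.2) e.2.1 ≤ _
        by_cases htgt : gE G e.2.2 = ⊤
        · have heED : e ∈ EDset G := ⟨hef.1, by rw [hef.2]; exact hD, htgt⟩
          have hge : 0 ≤ (m₀ : ℤ) + e.2.1 := by
            by_contra hlt
            exact hm₀ (DiesI.adam_dead hv heED hef.2 (by omega))
          have hnd : ¬ DiesI (EDset G) G.EveV e.2.2 ((m₀ : ℤ) + e.2.1) :=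
            fun hd => hm₀ (DiesI.adam_step hv heED hef.2 hd)
          exact hpp_tgt_le G heED hge hnd
        · have h1 : hpp G e.2.2 = gE G e.2.2 := by rw [hpp, if_neg htgt]
          rw [h1]
          refine le_trans (esub_le_BB G hef.1 htgt) ?_
          rw [Nat.cast_add]
          exact le_add_self
    · have hse : survS G v = ∅ := Set.not_nonempty_iff_eq_empty.1 hs
      have : hpp G v = ⊤ := by
        rw [hpp, if_pos hD, hse]
        simp
      rw [this]
      exact le_top
  · have : hpp G v = gE G v := by rw [hpp, if_neg hD]
    rw [this]
    calc Phi G (hpp G) v ≤ Phi G (gE G) v := (Phi G).monotone (hpp_le G) v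
      _ = gE G v := congrFun (gE_fixed G) v

lemma all_dies (v : G.V) (hD : gE G v = ⊤) (m : ℕ) : DiesI (EDset G) G.EveV v (m : ℤ) := by
  by_contra hnd
  have hle : gE G ≤ hpp G := OrderHom.lfp_le (Phi G) (hpp_prefix G)
  have h1 := hle v
  rw [hD] at h1
  have hppv : hpp G v = ⊤ := top_le_iff.1 h1
  rw [hpp, if_pos hD] at hppv
  have h2 : (⨅ m' ∈ survS G v, (m' : ℕ∞)) ≤ (m : ℕ∞) := iInf₂_le m (show m ∈ survS G v from hnd)
  have h3 : (⨅ m' ∈ survS G v, (m' : ℕ∞)) + ((BB G : ℕ) : ℕ∞) ≤ ((m + BB G : ℕ) : ℕ∞) := by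
    rw [Nat.cast_add]
    exact add_le_add_left h2 _
  rw [hppv] at h3
  exact absurd (top_le_iff.1 h3) (ENat.coe_ne_top _)

end MPAux
namespace MPAux

variable {W : Finset ℤ} {G : MPGame W}

/-- finite paths from the initial vertex consistent with a strategy -/
def ConsFin (σ : Strategy G) (p : List (G.V × ℤ × G.V)) : Prop :=
  FinPath G.E G.init p ∧
    ∀ i (h : i < p.length), (p.get ⟨i, h⟩).1 ∈ G.EveV → σ.f (p.take i) = p.get ⟨i, h⟩

lemma consFin_nil (σ : Strategy G) : ConsFin σ [] :=
  ⟨finPath_nil, fun i h => absurd h (by simp)⟩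

lemma consFin_concat {σ : Strategy G} {p : List (G.V × ℤ × G.V)} {e : G.V × ℤ × G.V}
    (hp : ConsFin σ p) (he : e ∈ G.E) (hsrc : e.1 = lastV G.init p)
    (hEve : e.1 ∈ G.EveV → σ.f p = e) : ConsFin σ (p ++ [e]) := by
  refine ⟨finPath_concat hp.1 he hsrc, ?_⟩
  intro i h hEveV
  have hlen : i < p.length + 1 := by simpa using h
  rcases Nat.lt_or_ge i p.length with hi | hi
  · have hget : (p ++ [e]).get ⟨i, h⟩ = p.get ⟨i, hi⟩ := by
      simp only [List.get_eq_getElem]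
      exact List.getElem_append_left hi
    rw [hget, List.take_append_of_le_length (le_of_lt hi)]
    rw [hget] at hEveV
    exact hp.2 i hi hEveV
  · have hieq : i = p.length := by omega
    subst hieq
    have hget : (p ++ [e]).get ⟨p.length, h⟩ = e := by
      simp only [List.get_eq_getElem]
      rw [List.getElem_append_right le_rfl]
      simp
    rw [hget, List.take_append_of_le_length le_rfl, List.take_length]
    rw [hget] at hEveV
    exact hEve hEveV

lemma phase (σ : Strategy G) : ∀ (k : ℕ) (p : List (G.V × ℤ × G.V)) (c : ℤ),
    DiesIn (EDset G) G.EveV k (lastV G.init p) c → ConsFin σ p →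
    gE G (lastV G.init p) = ⊤ →
    ∃ q, q ≠ [] ∧ q.length ≤ k ∧ ConsFin σ (p ++ q) ∧ (∀ e ∈ q, e ∈ EDset G) ∧
      c + pathWeight q < 0 := by
  intro k
  induction k with
  | zero => intro p c hd; exact hd.elim
  | succ k ih =>
    intro p c hd hp hD
    by_cases hv : lastV G.init p ∈ G.EveV
    · obtain ⟨hmemE, hsrc⟩ := σ.valid p hp.1 hv
      set e := σ.f p with hedef
      have hfromE : e ∈ fromE G (lastV G.init p) := ⟨hmemE, hsrc⟩
      have htgt : gE G e.2.2 = ⊤ := eve_all_top G hv hD e hfromE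
      have heED : e ∈ EDset G := ⟨hmemE, by rw [hsrc]; exact hD, htgt⟩
      have hcons : ConsFin σ (p ++ [e]) := consFin_concat hp hmemE hsrc (fun _ => rfl)
      by_cases hneg : c + e.2.1 < 0
      · refine ⟨[e], by simp, by simp, hcons, by simp [heED], ?_⟩
        simpa [pathWeight] using hneg
      · have hge : 0 ≤ c + e.2.1 := by omega
        have hd' : DiesIn (EDset G) G.EveV k e.2.2 (c + e.2.1) := hd.1 hv e heED hsrc hge
        have hlast : lastV G.init (p ++ [e]) = e.2.2 := lastV_concat
        obtain ⟨q', hq1, hq2, hq3, hq4, hq5⟩ :=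
          ih (p ++ [e]) (c + e.2.1) (by rw [hlast]; exact hd') hcons (by rw [hlast]; exact htgt)
        refine ⟨e :: q', by simp, by simp; omega, ?_, ?_, ?_⟩
        · rwa [List.append_cons]
        · intro x hx
          rcases List.mem_cons.1 hx with rfl | hx'
          · exact heED
          · exact hq4 x hx'
        · have hw : pathWeight (e :: q') = e.2.1 + pathWeight q' := by simp [pathWeight]
          omega
    · obtain ⟨e, heED, hsrc, hor⟩ := hd.2 hv
      have hcons : ConsFin σ (p ++ [e]) :=
        consFin_concat hp heED.1 hsrc (fun h => absurd (hsrc ▸ h) hv)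
      rcases hor with hneg | hd'
      · refine ⟨[e], by simp, by simp, hcons, by simp [heED], ?_⟩
        simpa [pathWeight] using hneg
      · have htgt : gE G e.2.2 = ⊤ := heED.2.2
        have hlast : lastV G.init (p ++ [e]) = e.2.2 := lastV_concat
        obtain ⟨q', hq1, hq2, hq3, hq4, hq5⟩ :=
          ih (p ++ [e]) (c + e.2.1) (by rw [hlast]; exact hd') hcons (by rw [hlast]; exact htgt)
        refine ⟨e :: q', by simp, by simp; omega, ?_, ?_, ?_⟩
        · rwa [List.append_cons]
        · intro x hx
          rcases List.mem_cons.1 hx with rfl | hx'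
          · exact heED
          · exact hq4 x hx'
        · have hw : pathWeight (e :: q') = e.2.1 + pathWeight q' := by simp [pathWeight]
          omega

lemma exists_N (G : MPGame W) :
    ∃ N, 0 < N ∧ ∀ v : G.V, gE G v = ⊤ → DiesIn (EDset G) G.EveV N v 0 := by
  have hfin : (EDset G).Finite := (E_finite G).subset (EDset_sub G)
  have h : ∀ v ∈ {v : G.V | gE G v = ⊤}, ∃ k, DiesIn (EDset G) G.EveV k v 0 :=
    fun v hv => diesI_fuel hfin (all_dies G v hv 0)
  obtain ⟨N, hN⟩ := exists_uniform (Set.toFinite _)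
    (fun v k => DiesIn (EDset G) G.EveV k v 0) (fun v _ _ hkk hP => diesIn_mono hkk hP) h
  exact ⟨N + 1, Nat.succ_pos _, fun v hv => diesIn_mono (Nat.le_succ N) (hN v hv)⟩

lemma lastV_top {p q : List (G.V × ℤ × G.V)} (hq1 : q ≠ [])
    (hq4 : ∀ e ∈ q, e ∈ EDset G) : gE G (lastV G.init (p ++ q)) = ⊤ := by
  rw [lastV_append, lastV_eq_getLast hq1]
  exact (hq4 _ (List.getLast_mem hq1)).2.2

section SideB

variable (σ : Strategy G) (N : ℕ)
  (hN : ∀ v : G.V, gE G v = ⊤ → DiesIn (EDset G) G.EveV N v 0)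
  (htop : gE G G.init = ⊤)

/-- the sequence of consistent finite paths obtained by iterating Adam's forcing -/
noncomputable def Pseq : ℕ → {p : List (G.V × ℤ × G.V) // ConsFin σ p ∧ gE G (lastV G.init p) = ⊤}
  | 0 => ⟨[], consFin_nil σ, by simpa using htop⟩
  | (j+1) =>
    let prev := Pseq j
    let h := phase σ N prev.1 0 (hN _ prev.2.2) prev.2.1 prev.2.2
    ⟨prev.1 ++ Classical.choose h,
     (Classical.choose_spec h).2.2.1,
     lastV_top (Classical.choose_spec h).1 (Classical.choose_spec h).2.2.2.1⟩

lemma Pseq_step (j : ℕ) :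
    (Pseq σ N hN htop j).1 <+: (Pseq σ N hN htop (j+1)).1 ∧
    (Pseq σ N hN htop (j+1)).1.length ≤ (Pseq σ N hN htop j).1.length + N ∧
    (Pseq σ N hN htop j).1.length + 1 ≤ (Pseq σ N hN htop (j+1)).1.length ∧
    pathWeight (Pseq σ N hN htop (j+1)).1 ≤ pathWeight (Pseq σ N hN htop j).1 - 1 := by
  have h := phase σ N (Pseq σ N hN htop j).1 0 (hN _ (Pseq σ N hN htop j).2.2)
    (Pseq σ N hN htop j).2.1 (Pseq σ N hN htop j).2.2
  have heq : (Pseq σ N hN htop (j+1)).1 = (Pseq σ N hN htop j).1 ++ Classical.choose h := rfl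
  obtain ⟨hq1, hq2, _, _, hq5⟩ := Classical.choose_spec h
  rw [heq]
  refine ⟨List.prefix_append _ _, ?_, ?_, ?_⟩
  · simp only [List.length_append]; omega
  · have : 1 ≤ (Classical.choose h).length := List.length_pos_iff.2 hq1
    simp only [List.length_append]; omega
  · rw [pathWeight_append]
    omega

end SideB

end MPAux
namespace MPAux

variable {W : Finset ℤ} {G : MPGame W}

section SideB2

variable (σ : Strategy G) (N : ℕ)
  (hN : ∀ v : G.V, gE G v = ⊤ → DiesIn (EDset G) G.EveV N v 0)
  (htop : gE G G.init = ⊤)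

lemma Pseq_prefix : ∀ {i j : ℕ}, i ≤ j → (Pseq σ N hN htop i).1 <+: (Pseq σ N hN htop j).1 := by
  intro i j h
  induction j with
  | zero =>
    have hi0 : i = 0 := by omega
    subst hi0
    exact List.prefix_rfl
  | succ j ih =>
    rcases Nat.lt_or_ge i (j+1) with hij | hij
    · exact List.IsPrefix.trans (ih (by omega)) (Pseq_step σ N hN htop j).1
    · obtain rfl : i = j + 1 := by omega
      exact List.prefix_rfl

lemma Pseq_len_lb : ∀ j : ℕ, j ≤ (Pseq σ N hN htop j).1.length := by
  intro j
  induction j with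
  | zero => omega
  | succ j ih => have := (Pseq_step σ N hN htop j).2.2.1; omega

lemma Pseq_len_ub : ∀ j : ℕ, (Pseq σ N hN htop j).1.length ≤ j * N := by
  intro j
  induction j with
  | zero =>
    have h0 : (Pseq σ N hN htop 0).1 = [] := rfl
    rw [h0]; simp
  | succ j ih =>
    have := (Pseq_step σ N hN htop j).2.1
    have h2 : (j+1) * N = j * N + N := by ring
    omega

lemma Pseq_wt : ∀ j : ℕ, pathWeight (Pseq σ N hN htop j).1 ≤ -(j:ℤ) := by
  intro j
  induction j with
  | zero =>
    have h0 : (Pseq σ N hN htop 0).1 = [] := rfl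
    rw [h0]; simp [pathWeight]
  | succ j ih =>
    have := (Pseq_step σ N hN htop j).2.2.2
    push_cast
    omega

lemma play_lt (i : ℕ) : i < (Pseq σ N hN htop (i+1)).1.length :=
  lt_of_lt_of_le (Nat.lt_succ_self i) (Pseq_len_lb σ N hN htop (i+1))

noncomputable def play (i : ℕ) : G.V × ℤ × G.V :=
  (Pseq σ N hN htop (i+1)).1[i]'(play_lt σ N hN htop i)

lemma play_eq {i m : ℕ} (h : i + 1 ≤ m) (hlt : i < (Pseq σ N hN htop m).1.length) :
    play σ N hN htop i = (Pseq σ N hN htop m).1[i] :=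
  (Pseq_prefix σ N hN htop h).getElem _

lemma range_map_play {i m : ℕ} (him : i ≤ m) :
    (List.range i).map (play σ N hN htop) = (Pseq σ N hN htop m).1.take i := by
  have hilen : i ≤ (Pseq σ N hN htop m).1.length := le_trans him (Pseq_len_lb σ N hN htop m)
  apply List.ext_getElem
  · simp only [List.length_map, List.length_range, List.length_take]
    omega
  · intro j h1 h2
    simp only [List.length_map, List.length_range] at h1
    have hjm : j < (Pseq σ N hN htop m).1.length := by omega
    simp only [List.getElem_map, List.getElem_range, List.getElem_take]
    exact play_eq σ N hN htop (by omega) hjm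

lemma play_consistent : ConsistentPath σ (play σ N hN htop) := by
  refine ⟨⟨fun i => ?_, fun i => ?_⟩, ?_, ?_⟩
  · exact (Pseq σ N hN htop (i+1)).2.1.1.1 _ (List.getElem_mem _)
  · have hc := (Pseq σ N hN htop (i+2)).2.1.1.2.1
    rw [show List.Chain' _ _ ↔ List.IsChain _ _ from Iff.rfl, List.isChain_iff_getElem] at hc
    have hlen : i + 2 ≤ (Pseq σ N hN htop (i+2)).1.length := Pseq_len_lb σ N hN htop (i+2)
    have := hc i (by omega)
    rw [play_eq σ N hN htop (by omega : i+1 ≤ i+2) (by omega),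
        play_eq σ N hN htop (by omega : (i+1)+1 ≤ i+2) (by omega)]
    exact this
  · have hlen : 1 ≤ (Pseq σ N hN htop 1).1.length := Pseq_len_lb σ N hN htop 1
    have hne : (Pseq σ N hN htop 1).1 ≠ [] := by
      intro h; rw [h] at hlen; simp at hlen
    have h3 := (Pseq σ N hN htop 1).2.1.1.2.2 hne
    have h0 : play σ N hN htop 0 = (Pseq σ N hN htop 1).1.head hne := by
      show (Pseq σ N hN htop 1).1[0]'(play_lt σ N hN htop 0) = _
      exact List.getElem_zero _
    rw [h0]
    exact h3
  · intro i hEve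
    have hlt : i < (Pseq σ N hN htop (i+1)).1.length := play_lt σ N hN htop i
    have hcf := (Pseq σ N hN htop (i+1)).2.1.2 i hlt
    simp only [List.get_eq_getElem] at hcf
    rw [range_map_play σ N hN htop (Nat.le_succ i)]
    exact hcf hEve

lemma sum_play (j : ℕ) :
    ∑ i ∈ Finset.range ((Pseq σ N hN htop j).1.length), (play σ N hN htop i).2.1
      = pathWeight (Pseq σ N hN htop j).1 := by
  set L := (Pseq σ N hN htop j).1.length with hL
  have h1 : (List.range L).map (play σ N hN htop) = (Pseq σ N hN htop j).1 := by
    rw [range_map_play σ N hN htop (Nat.le_add_right L j)]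
    have hpre := Pseq_prefix σ N hN htop (Nat.le_add_left j L)
    have := List.prefix_iff_eq_take.1 hpre
    rw [← hL] at this
    exact this.symm
  rw [← pathWeight_range_map, h1]

theorem sideB (σ' : Strategy G) (hσ : EnsuresMP σ') (htop' : gE G G.init = ⊤) : False := by
  obtain ⟨N', hNpos, hN'⟩ := exists_N G
  have hcons := play_consistent σ' N' hN' htop'
  have hmp := hσ _ hcons
  refine not_meanPayoffSeq_of_drops _ (Mw W) ?_ N' hNpos
    (fun j => (Pseq σ' N' hN' htop' j).1.length) (Pseq_len_lb σ' N' hN' htop')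
    (Pseq_len_ub σ' N' hN' htop') ?_ hmp
  · intro i
    exact wt_ge G _ (hcons.1.1 i)
  · intro j
    rw [sum_play]
    exact Pseq_wt σ' N' hN' htop' j

end SideB2

end MPAux

/-- for an `(n,W)`-mean payoff game `G` and an `(n,W)`-separating
automaton `A` recognising the language `L`, Eve has a strategy ensuring mean payoff
iff she has a strategy ensuring `L`. -/
theorem ensuresMP_iff_ensuresLang {W : Finset ℤ} (n : ℕ) (G : MPGame W)
    (hG : Fintype.card G.V ≤ n) (A : SafetyAut W) (hA : Separating n A) :
    (∃ σ : Strategy G, EnsuresMP σ) ↔ ∃ σ : Strategy G, EnsuresLang σ A.Lang := by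
  constructor
  · rintro ⟨σ, hσ⟩
    by_cases htop : MPAux.gE G G.init = ⊤
    · exact (MPAux.sideB σ hσ htop).elim
    · exact MPAux.sideA G n hG A hA htop
  · rintro ⟨σ, hσ⟩
    exact ⟨σ, fun π hπ => (hA.2 (hσ π hπ)).2⟩
end

section
/- If there exists an (n,W)-universal graph with s vertices, then there exists a finite set A ⊆ ℤ with |A| ≤ s such that the W-linear graph on A is (n,W)-universal. -/
open Filter


/-- The `W`-linear graph on a set `A ⊆ ℤ`: vertices are the elements of `A`, and
for `v, v' ∈ A` and `w ∈ W` there is an edge `(v, w, v')` whenever `v' - v ≤ w`. -/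
def LinE (W : Finset ℤ) (A : Set ℤ) : Set (ℤ × ℤ × ℤ) :=
  {e | e.1 ∈ A ∧ e.2.2 ∈ A ∧ e.2.1 ∈ W ∧ e.2.2 - e.1 ≤ e.2.1}

/-- A homomorphism of labelled graphs (no requirement on initial vertices). -/
def IsHom {V U : Type} (E : Set (V × ℤ × V)) (E' : Set (U × ℤ × U)) (φ : V → U) : Prop :=
  ∀ e ∈ E, (φ e.1, e.2.1, φ e.2.2) ∈ E'

/-- A graph (given by its edge set) is `(n,W)`-universal if it satisfies mean payoff and
every `(n,W)`-graph satisfying mean payoff admits a homomorphism into it. -/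
def Universal (n : ℕ) (W : Finset ℤ) {U : Type} (EU : Set (U × ℤ × U)) : Prop :=
  SatMP EU ∧
    ∀ G : WGraph W, Fintype.card G.V ≤ n → SatMP G.E → ∃ φ : G.V → U, IsHom G.E EU φ

/-- The set of weights `(-N, N)`: integers `w` with `-N < w < N`. -/
noncomputable def Wball (N : ℕ) : Finset ℤ := Finset.Ioo (-(N : ℤ)) (N : ℤ)

/-- `φ` is the distance function from the initial vertex: `φ v` is the minimum total
weight of a finite path from the initial vertex to `v`. -/
def IsDistFrom {W : Finset ℤ} (G : WGraph W) (φ : G.V → ℤ) : Prop :=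
  ∀ v : G.V,
    (∃ p, FinPath G.E G.init p ∧ lastV G.init p = v ∧ pathWeight p = φ v) ∧
    ∀ p, FinPath G.E G.init p → lastV G.init p = v → φ v ≤ pathWeight p

/-! Restricted to its edges with weights in `W`, a universal graph still satisfies mean payoff,
so all its cycles have nonnegative weight and walk weights are bounded below. Then
`f u := -(least weight of a walk from u)` satisfies `f v' - f v ≤ w` on every edge `(v, w, v')`,
i.e. `f` is a homomorphism into the `W`-linear graph on the image of `f`, which has at most `s`
vertices. Moreover, a `W`-linear graph on a finite set `A` satisfies mean payoff, since along any
path the partial sums of weights are at least `min A - max A`. -/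

open Finset

section MeanWeight

noncomputable def meanWeight (w : ℕ → ℤ) (ℓ : ℕ) : ℝ := (∑ i ∈ range ℓ, (w i : ℝ)) / ℓ

variable {w : ℕ → ℤ}

lemma le_meanWeight {c : ℤ} (hc : ∀ i, c ≤ w i) {ℓ : ℕ} (hℓ : 0 < ℓ) :
    (c : ℝ) ≤ meanWeight w ℓ := by
  rw [meanWeight, le_div_iff₀ (by exact_mod_cast hℓ)]
  simpa [mul_comm] using card_nsmul_le_sum (range ℓ) (fun i => (w i : ℝ)) c
    fun i _ => by exact_mod_cast hc i

lemma meanWeight_le {c : ℤ} (hc : ∀ i, w i ≤ c) {ℓ : ℕ} (hℓ : 0 < ℓ) :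
    meanWeight w ℓ ≤ c := by
  rw [meanWeight, div_le_iff₀ (by exact_mod_cast hℓ)]
  simpa [mul_comm] using sum_le_card_nsmul (range ℓ) (fun i => (w i : ℝ)) c
    fun i _ => by exact_mod_cast hc i

lemma meanPayoffSeq_of_sum_ge {c d : ℤ} (hsum : ∀ ℓ, c ≤ ∑ i ∈ range ℓ, w i)
    (hd : ∀ i, w i ≤ d) : MeanPayoffSeq w := by
  have hlim : Tendsto (fun ℓ : ℕ => (c : ℝ) / ℓ) atTop (nhds 0) :=
    tendsto_const_div_atTop_nhds_zero_nat _
  have hbdd : IsBoundedUnder (· ≤ ·) atTop (meanWeight w) :=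
    isBoundedUnder_of_eventually_le ((eventually_gt_atTop 0).mono fun _ => meanWeight_le hd)
  change 0 ≤ atTop.liminf (meanWeight w)
  rw [← hlim.liminf_eq]
  refine liminf_le_liminf (Eventually.of_forall fun ℓ => ?_) hlim.isBoundedUnder_ge
    hbdd.isCoboundedUnder_ge
  exact div_le_div_of_nonneg_right (by exact_mod_cast hsum ℓ) ℓ.cast_nonneg

lemma Function.Periodic.sum_range_mul_s7 {m : ℕ} (hw : Function.Periodic w m) (k : ℕ) :
    ∑ i ∈ range (k * m), w i = k * ∑ i ∈ range m, w i := by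
  induction k with
  | zero => simp
  | succ k ih =>
    have hshift (i : ℕ) : w (k * m + i) = w i := by
      rw [add_comm]; exact_mod_cast hw.nat_mul k i
    simp only [add_mul, one_mul, sum_range_add, ih, hshift]
    push_cast
    ring

/-- Along multiples of the period the averages equal the average over one period, which thus
bounds the liminf; the lower bound on the averages keeps that liminf from being a junk value. -/
lemma MeanPayoffSeq.sum_range_nonneg_of_periodic (h : MeanPayoffSeq w) {m : ℕ}
    (hw : Function.Periodic w m) (hm : 0 < m) : 0 ≤ ∑ i ∈ range m, w i := by
  by_contra! hneg
  set S : ℤ := ∑ i ∈ range m, w i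
  have hperiods (k : ℕ) : meanWeight w ((k + 1) * m) = (S : ℝ) / m := by
    rw [meanWeight, ← Int.cast_sum, hw.sum_range_mul_s7]
    push_cast [S]
    exact mul_div_mul_left _ _ (by positivity)
  have hfreq : ∃ᶠ ℓ in atTop, meanWeight w ℓ ≤ (S : ℝ) / m :=
    frequently_atTop.2 fun N => ⟨(N + 1) * m, by nlinarith, (hperiods N).le⟩
  obtain ⟨i₀, -, hi₀⟩ := (range m).exists_min_image w ⟨0, mem_range.2 hm⟩
  have hmin (i : ℕ) : w i₀ ≤ w i := by
    rw [← hw.map_mod_nat i]; exact hi₀ _ (mem_range.2 (Nat.mod_lt i hm))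
  have hbdd : IsBoundedUnder (· ≥ ·) atTop (meanWeight w) :=
    isBoundedUnder_of_eventually_ge ((eventually_gt_atTop 0).mono fun _ => le_meanWeight hmin)
  have hle : atTop.liminf (meanWeight w) ≤ (S : ℝ) / m := liminf_le_of_frequently_le hfreq hbdd
  have hneg' : (S : ℝ) / m < 0 := div_neg_of_neg_of_pos (by exact_mod_cast hneg) (by positivity)
  have h' : 0 ≤ atTop.liminf (meanWeight w) := h
  linarith

end MeanWeight

section Walks

variable {V : Type} {E : Set (V × ℤ × V)}

lemma SatMP.mono {E' : Set (V × ℤ × V)} (h : SatMP E) (hE' : E' ⊆ E) : SatMP E' :=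
  fun π hπ => h π ⟨fun i => hE' (hπ.1 i), hπ.2⟩

def IsWalk (E : Set (V × ℤ × V)) (m : ℕ) (v : ℕ → V) (w : ℕ → ℤ) : Prop :=
  ∀ i < m, (v i, w i, v (i + 1)) ∈ E

variable {m : ℕ} {v : ℕ → V} {w : ℕ → ℤ}

lemma IsWalk.mono (h : IsWalk E m v w) {k : ℕ} (hk : k ≤ m) : IsWalk E k v w :=
  fun i hi => h i (hi.trans_le hk)

lemma IsWalk.infPath_of_closed (h : IsWalk E m v w) (hm : 0 < m) (hc : v m = v 0) :
    InfPath E fun n => (v (n % m), w (n % m), v (n % m + 1)) := by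
  refine ⟨fun n => h _ (Nat.mod_lt n hm), fun n => ?_⟩
  show v (n % m + 1) = v ((n + 1) % m)
  have hn : n + 1 = m * (n / m) + (n % m + 1) := by rw [← add_assoc, Nat.div_add_mod]
  by_cases hlt : n % m + 1 < m
  · rw [hn, Nat.mul_add_mod, Nat.mod_eq_of_lt hlt]
  · have heq : n % m + 1 = m := by have := Nat.mod_lt n hm; omega
    rw [hn, heq, ← Nat.mul_succ, Nat.mul_mod_right, hc]

lemma SatMP.sum_nonneg_of_closed (hE : SatMP E) (h : IsWalk E m v w) (hc : v m = v 0) :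
    0 ≤ ∑ i ∈ range m, w i := by
  rcases Nat.eq_zero_or_pos m with rfl | hm
  · simp
  have hper : Function.Periodic (fun n => w (n % m)) m := fun n => by simp
  have := (hE _ (h.infPath_of_closed hm hc)).sum_range_nonneg_of_periodic hper hm
  rwa [sum_congr rfl fun i hi => by rw [Nat.mod_eq_of_lt (mem_range.1 hi)]] at this

/-- Cut the walk at the first visit `i` of its endpoint: the closed part from `i` to `m` has
nonnegative weight, and the walk up to `i - 1` never visits `v i`. -/
lemma SatMP.mul_card_image_le_sum [DecidableEq V] (hE : SatMP E) {b : ℤ} (hb0 : b ≤ 0)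
    (hb : ∀ e ∈ E, b ≤ e.2.1) (h : IsWalk E m v w) :
    b * #((range (m + 1)).image v) ≤ b + ∑ i ∈ range m, w i := by
  induction m using Nat.strong_induction_on with
  | _ m ih =>
  have hex : ∃ i, v i = v m := ⟨m, rfl⟩
  set i := Nat.find hex
  have him : i ≤ m := Nat.find_min' hex rfl
  have hfirst : ∀ k < i, v k ≠ v m := fun k => Nat.find_min hex
  have hcycle : 0 ≤ ∑ k ∈ range (m - i), w (i + k) :=
    hE.sum_nonneg_of_closed (v := fun k => v (i + k)) (fun k hk => by
      simpa [add_assoc] using h (i + k) (by omega))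
      (by simp [Nat.add_sub_cancel' him, i, Nat.find_spec hex])
  have hsplit : ∑ k ∈ range m, w k = ∑ k ∈ range i, w k + ∑ k ∈ range (m - i), w (i + k) := by
    rw [← sum_range_add, Nat.add_sub_cancel' him]
  have hcard_pos : 0 < #((range (m + 1)).image v) := card_pos.2 (by simp)
  rcases Nat.eq_zero_or_pos i with hi0 | hipos
  · have hS : b * #((range (m + 1)).image v) ≤ b * 1 :=
      mul_le_mul_of_nonpos_left (by exact_mod_cast hcard_pos) hb0
    have hpre : ∑ k ∈ range i, w k = 0 := by rw [hi0, sum_range_zero]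
    linarith
  obtain ⟨j, hj⟩ := Nat.exists_eq_add_one.2 hipos
  have hvi : v (j + 1) = v m := hj ▸ Nat.find_spec hex
  have hfresh : v (j + 1) ∉ (range (j + 1)).image v := by
    simp only [mem_image, mem_range, not_exists, not_and]
    exact fun k hk => hvi ▸ hfirst k (by omega)
  have hsub : insert (v (j + 1)) ((range (j + 1)).image v) ⊆ (range (m + 1)).image v := by
    rw [← image_insert, ← range_add_one]
    exact image_subset_image (range_subset_range.2 (by omega))
  have hcard := card_le_card hsub
  rw [card_insert_of_notMem hfresh] at hcard
  have hprefix := ih j (by omega) (h.mono (by omega))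
  have hedge : b ≤ w j := hb _ (h j (by omega))
  have hS : b * #((range (m + 1)).image v) ≤ b * (#((range (j + 1)).image v) + 1) :=
    mul_le_mul_of_nonpos_left (by exact_mod_cast hcard) hb0
  have hpre : ∑ k ∈ range i, w k = ∑ k ∈ range j, w k + w j := by rw [hj, sum_range_succ]
  linarith

lemma SatMP.mul_card_le_sum [Fintype V] (hE : SatMP E) {b : ℤ} (hb0 : b ≤ 0)
    (hb : ∀ e ∈ E, b ≤ e.2.1) (h : IsWalk E m v w) :
    b * Fintype.card V ≤ ∑ i ∈ range m, w i := by
  classical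
  have hcard : #((range (m + 1)).image v) ≤ Fintype.card V := card_le_univ _
  have := hE.mul_card_image_le_sum hb0 hb h
  nlinarith

def walkWeightsFrom (E : Set (V × ℤ × V)) (u : V) : Set ℤ :=
  {s | ∃ m v w, IsWalk E m v w ∧ v 0 = u ∧ ∑ i ∈ range m, w i = s}

lemma zero_mem_walkWeightsFrom (u : V) : 0 ∈ walkWeightsFrom E u :=
  ⟨0, fun _ => u, 0, fun _ hi => absurd hi (Nat.not_lt_zero _), rfl, sum_range_zero _⟩

lemma add_mem_walkWeightsFrom {e : V × ℤ × V} (he : e ∈ E) {s : ℤ}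
    (hs : s ∈ walkWeightsFrom E e.2.2) : e.2.1 + s ∈ walkWeightsFrom E e.1 := by
  obtain ⟨m, v, w, hw, hv0, rfl⟩ := hs
  refine ⟨m + 1, fun | 0 => e.1 | i + 1 => v i, fun | 0 => e.2.1 | i + 1 => w i, ?_, rfl, ?_⟩
  · rintro (_ | i) hi
    · simpa [hv0] using he
    · exact hw i (by omega)
  · rw [sum_range_succ', add_comm]

lemma SatMP.bddBelow_walkWeightsFrom [Fintype V] (hE : SatMP E) {b : ℤ}
    (hb : ∀ e ∈ E, b ≤ e.2.1) (u : V) : BddBelow (walkWeightsFrom E u) := by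
  refine ⟨min b 0 * Fintype.card V, ?_⟩
  rintro _ ⟨m, v, w, hw, -, rfl⟩
  exact hE.mul_card_le_sum (min_le_right _ _) (fun e he => (min_le_left _ _).trans (hb e he)) hw

theorem SatMP.exists_potential [Fintype V] (hE : SatMP E) {b : ℤ} (hb : ∀ e ∈ E, b ≤ e.2.1) :
    ∃ f : V → ℤ, ∀ e ∈ E, f e.2.2 - f e.1 ≤ e.2.1 := by
  have hbdd := hE.bddBelow_walkWeightsFrom hb
  refine ⟨fun u => -sInf (walkWeightsFrom E u), fun e he => ?_⟩
  have hmin := Int.csInf_mem ⟨0, zero_mem_walkWeightsFrom e.2.2⟩ (hbdd e.2.2)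
  have := csInf_le (hbdd e.1) (add_mem_walkWeightsFrom he hmin)
  dsimp only
  linarith

end Walks

lemma satMP_linE (W A : Finset ℤ) : SatMP (LinE W A) := by
  rintro π ⟨hE, hcons⟩
  have hA : A.Nonempty := ⟨_, (hE 0).1⟩
  have hW : W.Nonempty := ⟨_, (hE 0).2.2.1⟩
  refine meanPayoffSeq_of_sum_ge (c := A.min' hA - A.max' hA) (d := W.max' hW) (fun ℓ => ?_)
    fun i => W.le_max' _ (hE i).2.2.1
  calc A.min' hA - A.max' hA ≤ (π ℓ).1 - (π 0).1 :=
        sub_le_sub (A.min'_le _ (hE ℓ).1) (A.le_max' _ (hE 0).1)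
    _ = ∑ i ∈ range ℓ, ((π (i + 1)).1 - (π i).1) := (sum_range_sub (fun i => (π i).1) ℓ).symm
    _ ≤ ∑ i ∈ range ℓ, (π i).2.1 := sum_le_sum fun i _ => hcons i ▸ (hE i).2.2.2

/-- if there exists an `(n,W)`-universal graph with `s` vertices,
then there exists a finite set `A ⊆ ℤ` with `|A| ≤ s` such that the `W`-linear graph
on `A` is `(n,W)`-universal. -/
theorem linearisation {W : Finset ℤ} (n s : ℕ) (U : Type) [Fintype U]
    (EU : Set (U × ℤ × U)) (hU : Universal n W EU) (hs : Fintype.card U = s) :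
    ∃ A : Finset ℤ, A.card ≤ s ∧ Universal n W (LinE W (↑A : Set ℤ)) := by
  classical
  obtain ⟨hmp, hhom⟩ := hU
  obtain ⟨b, hb⟩ := W.bddBelow
  have hmpW : SatMP {e ∈ EU | e.2.1 ∈ W} := hmp.mono (Set.sep_subset _ _)
  obtain ⟨f, hf⟩ := hmpW.exists_potential fun e he => hb he.2
  refine ⟨univ.image f, hs ▸ card_image_le, satMP_linE W _, fun G hG hGmp => ?_⟩
  obtain ⟨φ, hφ⟩ := hhom G hG hGmp
  refine ⟨f ∘ φ, fun e he => ?_⟩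
  exact ⟨mem_image_of_mem f (mem_univ _), mem_image_of_mem f (mem_univ _), G.wt e he,
    hf _ ⟨hφ e he, G.wt e he⟩⟩
end

section
/- Let G be a W-graph, A ⊆ ℤ a finite set, and φ a homomorphism from G to the W-linear graph on A. If (v_0,w_0,v_1)(v_1,w_1,v_2)⋯(v_{ℓ−1},w_{ℓ−1},v_0) is a cycle in G whose weights sum to 0, then φ(v_{i+1}) − φ(v_i) = w_i for every i ∈ [0,ℓ) (with the convention v_ℓ = v_0). -/
open Filter


/-
Every edge `(v, w, v')` of `G` is sent to an edge of the linear graph, so `φ v' - φ v ≤ w`.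
Along a cycle the left-hand sides telescope to `0`, which is also the sum of the right-hand sides;
a sum of inequalities that is an equality is an equality termwise.
-/

theorem sum_map_sub_eq_lastV_sub {V M : Type} [AddCommGroup M] (f : V → M) :
    ∀ (u : V) (p : List (V × ℤ × V)), p.IsChain (fun e e' => e.2.2 = e'.1) →
      (∀ h : p ≠ [], (p.head h).1 = u) →
      (p.map fun e => f e.2.2 - f e.1).sum = f (lastV u p) - f u
  | u, [], _, _ => by simp [lastV]
  | u, e :: q, hchain, hhead => by
    have hq : (q.map fun e => f e.2.2 - f e.1).sum = f (lastV e.2.2 q) - f e.2.2 :=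
      sum_map_sub_eq_lastV_sub f e.2.2 q (List.isChain_cons.mp hchain).2 fun hq =>
        ((List.isChain_cons.mp hchain).1 _ (List.head?_eq_some_head hq)).symm
    have hlast : lastV u (e :: q) = lastV e.2.2 q := by cases q <;> rfl
    rw [List.map_cons, List.sum_cons, hq, hlast, ← hhead (List.cons_ne_nil e q)]
    simp only [List.head_cons]
    abel

theorem IsHom.sub_le_weight {V : Type} {E : Set (V × ℤ × V)} {W : Finset ℤ} {A : Set ℤ}
    {φ : V → ℤ} (hφ : IsHom E (LinE W A) φ) {e : V × ℤ × V} (he : e ∈ E) :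
    φ e.2.2 - φ e.1 ≤ e.2.1 :=
  (hφ e he).2.2.2

theorem hom_equality_on_zero_cycle_general {W : Finset ℤ} (G : WGraph W) (A : Set ℤ)
    (φ : G.V → ℤ) (hφ : IsHom G.E (LinE W A) φ)
    (v0 : G.V) (p : List (G.V × ℤ × G.V))
    (hp : FinPath G.E v0 p) (hcycle : lastV v0 p = v0)
    (hzero : pathWeight p = 0) :
    ∀ (i : ℕ) (h : i < p.length),
      φ (p.get ⟨i, h⟩).2.2 - φ (p.get ⟨i, h⟩).1 = (p.get ⟨i, h⟩).2.1 := by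
  obtain ⟨hedges, hchain, hhead⟩ := hp
  have hle : ∀ e ∈ p, φ e.2.2 - φ e.1 ≤ e.2.1 := fun e he => hφ.sub_le_weight (hedges e he)
  have hsum : (p.map fun e => φ e.2.2 - φ e.1).sum = (p.map fun e => e.2.1).sum := by
    rw [sum_map_sub_eq_lastV_sub φ v0 p hchain hhead, hcycle, sub_self]
    exact hzero.symm
  intro i h
  exact (hle _ (p.get_mem _)).eq_of_not_lt fun hlt =>
    (List.sum_lt_sum _ _ hle ⟨_, p.get_mem _, hlt⟩).ne hsum

/-- if `φ` is a homomorphism from a `W`-graph `G` to the `W`-linear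
graph on a finite set `A ⊆ ℤ`, then along any cycle of `G` of total weight `0` all
the inequalities defining the homomorphism are equalities:
`φ(v_{i+1}) - φ(v_i) = w_i` for every edge `(v_i, w_i, v_{i+1})` of the cycle. -/
theorem hom_equality_on_zero_cycle {W : Finset ℤ} (G : WGraph W) (A : Set ℤ)
    (hA : A.Finite) (φ : G.V → ℤ) (hφ : IsHom G.E (LinE W A) φ)
    (v0 : G.V) (p : List (G.V × ℤ × G.V))
    (hp : FinPath G.E v0 p) (hne : p ≠ []) (hcycle : lastV v0 p = v0)
    (hzero : pathWeight p = 0) :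
    ∀ (i : ℕ) (h : i < p.length),
      φ (p.get ⟨i, h⟩).2.2 - φ (p.get ⟨i, h⟩).1 = (p.get ⟨i, h⟩).2.1 :=
  hom_equality_on_zero_cycle_general G A φ hφ v0 p hp hcycle hzero
end

section
/- For all integers n, N ≥ 1, the deterministic safety automaton over W = (−N,N) with state set {q ∈ ℤ : −nN < q < nN} ∪ {⊥}, initial state nN − 1, and transition function δ(q,w) = min(nN − 1, q + w) if q + w > −nN and δ(q,w) = ⊥ otherwise (and δ(⊥,w) = ⊥), is an (n,(−N,N))-separating automaton. -/
/-!
While reading a word, the state of the automaton is `nN - 1` plus the least sum of a suffix of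
the prefix read so far (the clamp at `nN - 1` accounts for the empty suffix), until this drops
to `-nN` or below. Hence the prefix sums of an accepted word stay above `-2nN`, and its averages
have nonnegative liminf. Conversely, in a graph satisfying mean payoff every cycle has
nonnegative weight, since going around a negative cycle forever has negative mean payoff.
Cutting a path at the last return to its first vertex then shows that every finite path in a
graph with at most `n` vertices and weights `> -N` weighs at least `-n(N - 1) > -2nN + 1`, so
the run on its weights never reaches `⊥`.
-/

open Filter


/-- The deterministic safety automaton over `(-N, N)` with states the integers of the
interval `(-nN, nN)` (plus `⊥`), initial state `nN - 1`, and transition function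
`δ(q, w) = min (nN - 1) (q + w)` when `q + w > -nN`, and `δ(q, w) = ⊥` otherwise. -/
noncomputable def clampAut (n N : ℕ) (hn : 1 ≤ n) (hN : 1 ≤ N) : SafetyAut (Wball N) where
  Q := Option ↥(Set.Ioo (-(n * N : ℤ)) (n * N : ℤ))
  fin := inferInstance
  bot := none
  qinit := some ⟨(n * N : ℤ) - 1, by
    have h1 : (1 : ℤ) ≤ (n : ℤ) * (N : ℤ) := by
      exact_mod_cast Nat.mul_pos hn hN
    constructor <;> linarith⟩
  δ := fun q w =>
    match q with
    | none => none
    | some q =>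
      if h : -(n * N : ℤ) < q.1 + w then
        some ⟨min ((n * N : ℤ) - 1) (q.1 + w), by
          have h1 : (1 : ℤ) ≤ (n : ℤ) * (N : ℤ) := by
            exact_mod_cast Nat.mul_pos hn hN
          have h2 := q.2
          simp only [Set.mem_Ioo] at h2
          constructor
          · exact lt_min_iff.mpr ⟨by linarith, h⟩
          · exact lt_of_le_of_lt (min_le_left _ _) (by linarith)⟩
      else none
  bot_absorbing := fun w _ => rfl

open Finset

noncomputable def prefixAvg (w : ℕ → ℤ) (ℓ : ℕ) : ℝ := (∑ i ∈ range ℓ, (w i : ℝ)) / ℓ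

lemma meanPayoffSeq_iff_prefixAvg {w : ℕ → ℤ} :
    MeanPayoffSeq w ↔ 0 ≤ atTop.liminf (prefixAvg w) := Iff.rfl

lemma abs_prefixAvg_le {w : ℕ → ℤ} {b : ℤ} (hw : ∀ i, |w i| ≤ b) (ℓ : ℕ) :
    |prefixAvg w ℓ| ≤ b := by
  rcases Nat.eq_zero_or_pos ℓ with rfl | hℓ
  · simpa [prefixAvg] using (abs_nonneg _).trans (hw 0)
  have hsum : |∑ i ∈ range ℓ, (w i : ℝ)| ≤ ℓ * b :=
    calc |∑ i ∈ range ℓ, (w i : ℝ)| ≤ ∑ i ∈ range ℓ, |(w i : ℝ)| := abs_sum_le_sum_abs _ _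
      _ ≤ ∑ _i ∈ range ℓ, (b : ℝ) := sum_le_sum fun i _ => mod_cast hw i
      _ = ℓ * b := by simp
  rw [prefixAvg, abs_div, Nat.abs_cast, div_le_iff₀ (by positivity)]
  linarith

lemma isBoundedUnder_prefixAvg {w : ℕ → ℤ} {b : ℤ} (hw : ∀ i, |w i| ≤ b) :
    IsBoundedUnder (· ≥ ·) atTop (prefixAvg w) ∧ IsBoundedUnder (· ≤ ·) atTop (prefixAvg w) :=
  ⟨isBoundedUnder_of ⟨-b, fun ℓ => (abs_le.mp (abs_prefixAvg_le hw ℓ)).1⟩,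
    isBoundedUnder_of ⟨b, fun ℓ => (abs_le.mp (abs_prefixAvg_le hw ℓ)).2⟩⟩

lemma meanPayoffSeq_of_le_sum_range {w : ℕ → ℤ} {b C : ℤ} (hw : ∀ i, |w i| ≤ b)
    (hC : ∀ ℓ, C ≤ ∑ i ∈ range ℓ, w i) : MeanPayoffSeq w := by
  have hlim : Tendsto (fun ℓ : ℕ => (C : ℝ) / ℓ) atTop (nhds 0) :=
    tendsto_const_div_atTop_nhds_zero_nat _
  have hle : ∀ ℓ, (C : ℝ) / ℓ ≤ prefixAvg w ℓ := fun ℓ =>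
    div_le_div_of_nonneg_right (by exact_mod_cast hC ℓ) ℓ.cast_nonneg
  rw [meanPayoffSeq_iff_prefixAvg, ← hlim.liminf_eq]
  exact liminf_le_liminf (.of_forall hle) hlim.isBoundedUnder_ge
    (isBoundedUnder_prefixAvg hw).2.isCoboundedUnder_ge

lemma sum_range_mul_mod (w : ℕ → ℤ) (p m : ℕ) :
    ∑ i ∈ range (m * p), w (i % p) = m * ∑ i ∈ range p, w i := by
  induction m with
  | zero => simp
  | succ m ih =>
    rw [add_one_mul, sum_range_add, ih]
    have hmod : ∑ i ∈ range p, w ((m * p + i) % p) = ∑ i ∈ range p, w i :=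
      sum_congr rfl fun i hi => by
        rw [Nat.mul_add_mod_self_right, Nat.mod_eq_of_lt (mem_range.mp hi)]
    rw [hmod]
    push_cast
    ring

lemma not_meanPayoffSeq_mod {w : ℕ → ℤ} {p : ℕ} (hneg : ∑ i ∈ range p, w i < 0) :
    ¬ MeanPayoffSeq fun i => w (i % p) := by
  set C := ∑ i ∈ range p, w i
  have hp : 0 < p := Nat.pos_of_ne_zero fun h => by simp [C, h] at hneg
  have hbdd : ∀ i, |w (i % p)| ≤ ∑ k ∈ range p, |w k| := fun i =>
    single_le_sum (f := fun k => |w k|) (fun _ _ => abs_nonneg _)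
      (mem_range.mpr (Nat.mod_lt i hp))
  have havg : ∀ m : ℕ, prefixAvg (fun i => w (i % p)) ((m + 1) * p) = C / p := fun m => by
    rw [prefixAvg, ← Int.cast_sum, sum_range_mul_mod]
    push_cast
    field_simp
    simp [C]
  have hfreq : ∃ᶠ ℓ in atTop, prefixAvg (fun i => w (i % p)) ℓ ≤ C / p :=
    frequently_atTop.mpr fun m => ⟨(m + 1) * p, by nlinarith, (havg m).le⟩
  rw [meanPayoffSeq_iff_prefixAvg, not_le]
  calc atTop.liminf (prefixAvg fun i => w (i % p)) ≤ C / p :=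
        liminf_le_of_frequently_le hfreq (isBoundedUnder_prefixAvg hbdd).1
    _ < 0 := div_neg_of_neg_of_pos (by exact_mod_cast hneg) (by exact_mod_cast hp)

namespace InfPath

variable {V : Type} {E : Set (V × ℤ × V)} {π : ℕ → V × ℤ × V}

lemma shift (hπ : InfPath E π) (j : ℕ) : InfPath E fun k => π (j + k) :=
  ⟨fun _ => hπ.1 _, fun _ => hπ.2 _⟩

lemma mod (hπ : InfPath E π) {p : ℕ} (hp : 0 < p) (hcyc : (π p).1 = (π 0).1) :
    InfPath E fun i => π (i % p) := by
  refine ⟨fun i => hπ.1 _, fun i => ?_⟩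
  rw [hπ.2]
  show _ = (π ((i + 1) % p)).1
  rw [← Nat.mod_add_mod]
  obtain h | h : i % p + 1 < p ∨ i % p + 1 = p := by have := Nat.mod_lt i hp; omega
  · rw [Nat.mod_eq_of_lt h]
  · rw [h, Nat.mod_self, hcyc]

end InfPath

namespace SatMP

variable {V : Type} {E : Set (V × ℤ × V)} {π : ℕ → V × ℤ × V}

lemma sum_range_nonneg_of_cycle (hMP : SatMP E) (hπ : InfPath E π) {p : ℕ}
    (hcyc : (π p).1 = (π 0).1) : 0 ≤ ∑ k ∈ range p, (π k).2.1 := by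
  by_contra! hneg
  have hp : 0 < p := Nat.pos_of_ne_zero (by rintro rfl; simp at hneg)
  exact not_meanPayoffSeq_mod hneg (hMP _ (hπ.mod hp hcyc))

lemma neg_mul_card_image_le_sum_Ico [DecidableEq V] (hMP : SatMP E) (hπ : InfPath E π)
    {b : ℤ} (hb : ∀ e ∈ E, |e.2.1| ≤ b) (j i : ℕ) :
    -(b * #((Ico j i).image fun k => (π k).1)) ≤ ∑ k ∈ Ico j i, (π k).2.1 := by
  induction hd : i - j using Nat.strong_induction_on generalizing j with
  | _ d ih =>
    rcases le_or_gt i j with hij | hji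
    · simp [Ico_eq_empty_of_le hij]
    -- Cut at the last return `a` to the first vertex: `[j, a)` is a cycle, and the vertices
    -- visited in `[a + 1, i)` are those of `[j, i)` without `π j`.
    set s := (Ico j i).filter fun k => (π k).1 = (π j).1
    have hjs : j ∈ s := by simp [s, hji]
    set a := s.max' ⟨j, hjs⟩
    obtain ⟨haI, hav⟩ : a ∈ Ico j i ∧ (π a).1 = (π j).1 := mem_filter.mp (s.max'_mem _)
    have hja : j ≤ a := (mem_Ico.mp haI).1
    have hai : a < i := (mem_Ico.mp haI).2
    have hlast : (π j).1 ∉ (Ico (a + 1) i).image fun k => (π k).1 := by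
      simp only [mem_image, not_exists, not_and]
      intro k hk hkj
      have hks : k ∈ s := mem_filter.mpr ⟨Ico_subset_Ico_left (by omega) hk, hkj⟩
      have := (mem_Ico.mp hk).1
      exact absurd (s.le_max' k hks) (by omega)
    have hsub : (Ico (a + 1) i).image (fun k => (π k).1) ⊂ (Ico j i).image fun k => (π k).1 :=
      (ssubset_iff_of_subset (image_subset_image (Ico_subset_Ico_left (by omega)))).mpr
        ⟨_, mem_image_of_mem _ (mem_Ico.mpr ⟨le_rfl, hji⟩), hlast⟩
    have hcycle : 0 ≤ ∑ k ∈ Ico j a, (π k).2.1 := by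
      rw [sum_Ico_eq_sum_range]
      exact hMP.sum_range_nonneg_of_cycle (hπ.shift j)
        (by simpa [Nat.add_sub_cancel' hja] using hav)
    have hedge : -b ≤ (π a).2.1 := (abs_le.mp (hb _ (hπ.1 a))).1
    have hrest := ih (i - (a + 1)) (by omega) (a + 1) rfl
    have hcard := card_lt_card hsub
    have hb0 : 0 ≤ b := (abs_nonneg _).trans (hb _ (hπ.1 0))
    rw [← sum_Ico_consecutive _ hja hai.le, sum_eq_sum_Ico_succ_bot hai]
    have : (b * #((Ico (a + 1) i).image fun k => (π k).1) + b : ℤ) ≤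
        b * #((Ico j i).image fun k => (π k).1) := by
      rw [← mul_add_one]
      exact mul_le_mul_of_nonneg_left (by exact_mod_cast hcard) hb0
    linarith

lemma neg_mul_card_le_sum_Ico [Fintype V] (hMP : SatMP E) (hπ : InfPath E π)
    {b : ℤ} (hb : ∀ e ∈ E, |e.2.1| ≤ b) (j i : ℕ) :
    -(b * Fintype.card V) ≤ ∑ k ∈ Ico j i, (π k).2.1 := by
  classical
  have hb0 : 0 ≤ b := (abs_nonneg _).trans (hb _ (hπ.1 0))
  refine le_trans ?_ (hMP.neg_mul_card_image_le_sum_Ico hπ hb j i)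
  exact neg_le_neg (mul_le_mul_of_nonneg_left (by exact_mod_cast card_le_univ _) hb0)

end SatMP

lemma abs_le_of_mem_Wball {N : ℕ} {z : ℤ} (hz : z ∈ Wball N) : |z| ≤ N - 1 := by
  rw [Wball, mem_Ioo] at hz
  exact abs_le.mpr ⟨by omega, by omega⟩

section clampAut

variable {n N : ℕ} {hn : 1 ≤ n} {hN : 1 ≤ N}

lemma clampAut_δ_of_lt {q : Set.Ioo (-(n * N : ℤ)) (n * N)} {a : ℤ}
    (h : -(n * N : ℤ) < q + a) :
    ∃ q' : Set.Ioo (-(n * N : ℤ)) (n * N),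
      (clampAut n N hn hN).δ (some q) a = some q' ∧
        (q' : ℤ) = min ((n * N : ℤ) - 1) (q + a) :=
  ⟨_, dif_pos h, rfl⟩

lemma clampAut_δ_of_le {q : Set.Ioo (-(n * N : ℤ)) (n * N)} {a : ℤ}
    (h : q + a ≤ -(n * N : ℤ)) :
    (clampAut n N hn hN).δ (some q) a = none :=
  dif_neg h.not_gt

lemma clampAut_run_zero (w : ℕ → ℤ) :
    ∃ q, (clampAut n N hn hN).run w 0 = some q ∧ (q : ℤ) = n * N - 1 :=
  ⟨_, rfl, rfl⟩

lemma clampAut_run_le_of_mem_lang {w : ℕ → ℤ} (hw : w ∈ (clampAut n N hn hN).Lang)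
    (i : ℕ) :
    ∃ q : Set.Ioo (-(n * N : ℤ)) (n * N), (clampAut n N hn hN).run w i = some q ∧
      (q : ℤ) ≤ n * N - 1 + ∑ k ∈ range i, w k := by
  induction i with
  | zero =>
    obtain ⟨q, hq, hval⟩ := clampAut_run_zero w
    exact ⟨q, hq, by simp [hval]⟩
  | succ i ih =>
    obtain ⟨q, hq, hle⟩ := ih
    have hrun :
        (clampAut n N hn hN).run w (i + 1) = (clampAut n N hn hN).δ (some q) (w i) := by
      rw [SafetyAut.run, hq]
    rcases lt_or_ge (-(n * N : ℤ)) (q + w i) with h | h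
    · obtain ⟨q', hq', hval⟩ := clampAut_δ_of_lt h
      refine ⟨q', hrun.trans hq', ?_⟩
      rw [sum_range_succ, hval]
      exact (min_le_right _ _).trans (by linarith)
    · exact absurd (hrun.trans (clampAut_δ_of_le h)) (hw.2 (i + 1))

theorem clampAut_lang_subset_mplang : (clampAut n N hn hN).Lang ⊆ MPlang (Wball N) := by
  intro w hw
  refine ⟨hw.1, meanPayoffSeq_of_le_sum_range (C := -(2 * n * N))
    (fun i => abs_le_of_mem_Wball (hw.1 i)) fun ℓ => ?_⟩
  obtain ⟨q, -, hq⟩ := clampAut_run_le_of_mem_lang hw ℓ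
  linarith [q.2.1]

lemma clampAut_run_eq_add_sum_Ico {w : ℕ → ℤ}
    (hS : ∀ j i, -(2 * n * N : ℤ) + 1 < ∑ k ∈ Ico j i, w k) (i : ℕ) :
    ∃ q : Set.Ioo (-(n * N : ℤ)) (n * N), ∃ j ≤ i, (clampAut n N hn hN).run w i = some q ∧
      (q : ℤ) = n * N - 1 + ∑ k ∈ Ico j i, w k := by
  induction i with
  | zero =>
    obtain ⟨q, hq, hval⟩ := clampAut_run_zero w
    exact ⟨q, 0, le_rfl, hq, by simp [hval]⟩
  | succ i ih =>
    obtain ⟨q, j, hji, hq, hval⟩ := ih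
    have hrun :
        (clampAut n N hn hN).run w (i + 1) = (clampAut n N hn hN).δ (some q) (w i) := by
      rw [SafetyAut.run, hq]
    have hsucc := sum_Ico_succ_top hji w
    have h : -(n * N : ℤ) < q + w i := by linarith [hS j (i + 1)]
    obtain ⟨q', hq', hval'⟩ := clampAut_δ_of_lt h
    rcases min_choice ((n * N : ℤ) - 1) (q + w i) with hmin | hmin
    · exact ⟨q', i + 1, le_rfl, hrun.trans hq', by simp [hval', hmin]⟩
    · exact ⟨q', j, by omega, hrun.trans hq', by rw [hval', hmin, hsucc, hval]; ring⟩

lemma clampAut_mem_lang {w : ℕ → ℤ} (hW : ∀ i, w i ∈ Wball N)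
    (hS : ∀ j i, -(2 * n * N : ℤ) + 1 < ∑ k ∈ Ico j i, w k) :
    w ∈ (clampAut n N hn hN).Lang := by
  refine ⟨hW, fun i => ?_⟩
  obtain ⟨q, j, -, hq, -⟩ := clampAut_run_eq_add_sum_Ico (hn := hn) (hN := hN) hS i
  rw [hq]
  exact Option.some_ne_none q

theorem mpn_subset_clampAut_lang : MPn n (Wball N) ⊆ (clampAut n N hn hN).Lang := by
  rintro w ⟨G, hcard, hMP, π, hπ, hwπ⟩
  have hb : ∀ e ∈ G.E, |e.2.1| ≤ N - 1 := fun e he => abs_le_of_mem_Wball (G.wt e he)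
  have hW : ∀ i, w i ∈ Wball N := fun i => hwπ i ▸ G.wt _ (hπ.1 i)
  refine clampAut_mem_lang hW fun j i => ?_
  have hsum := hMP.neg_mul_card_le_sum_Ico hπ hb j i
  simp only [hwπ] at hsum
  have hcard' : ((N : ℤ) - 1) * Fintype.card G.V ≤ (N - 1) * n :=
    mul_le_mul_of_nonneg_left (by exact_mod_cast hcard) (by omega)
  nlinarith

end clampAut

/-- the automaton `clampAut n N` is `(n, (-N,N))`-separating. -/
theorem clampAut_separating (n N : ℕ) (hn : 1 ≤ n) (hN : 1 ≤ N) :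
    Separating n (clampAut n N hn hN) :=
  ⟨mpn_subset_clampAut_lang, clampAut_lang_subset_mplang⟩
end
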